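/- arXiv:math/0503746 — 7 statements merged into one kernel-verified Lean document; each statement's English description precedes it below -/
import Mathlib

section
/- Let P be a finite p-group whose rank equals the rank of its center, i.e. rk(P) = rk(Z(P)). Then Ω₁(Z(P)) is the unique maximal (under inclusion) elementary abelian subgroup of P, and Ω₁(P) = Ω₁(Z(P)). -/
/-- A subgroup is elementary abelian for the prime `p` if it is commutative and
every element has order dividing `p`. -/
def IsElementaryAbelian (p : ℕ) {G : Type*} [Group G] (H : Subgroup G) : Prop :=
  (∀ x ∈ H, ∀ y ∈ H, x * y = y * x) ∧ ∀ x ∈ H, x ^ p = 1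

/-- `Ω₁(H)`: the subgroup generated by the elements of `H` of order dividing `p`. -/
def Omega1 (p : ℕ) {G : Type*} [Group G] (H : Subgroup G) : Subgroup G :=
  Subgroup.closure {x : G | x ∈ H ∧ x ^ p = 1}

/-- The `p`-rank of a group: the largest `n` such that the group contains an
elementary abelian subgroup of order `p ^ n`. -/
noncomputable def pRank (p : ℕ) (G : Type*) [Group G] : ℕ :=
  sSup {n | ∃ E : Subgroup G, IsElementaryAbelian p E ∧ Nat.card E = p ^ n}

/-!
Ω₁(Z(P)) is elementary abelian, and by the rank hypothesis its order `p ^ rk(Z(P))` is the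
largest order of an elementary abelian subgroup of `P`. Adjoining to it any element `x` with
`x ^ p = 1` keeps it elementary abelian, since it is central, so it cannot grow: `x` already
lies in Ω₁(Z(P)). Both claims follow at once.
-/

open Subgroup

section ElementaryAbelian

variable {p : ℕ} {G : Type*} [Group G]

theorem isElementaryAbelian_closure {S : Set G} (hcomm : ∀ x ∈ S, ∀ y ∈ S, x * y = y * x)
    (hpow : ∀ x ∈ S, x ^ p = 1) : IsElementaryAbelian p (closure S) := by
  have hcomm' : ∀ x ∈ closure S, ∀ y ∈ closure S, x * y = y * x := fun x hx y hy =>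
    Set.centralizer_centralizer_comm_of_comm hcomm _ (closure_le_centralizer_centralizer S hx)
      _ (closure_le_centralizer_centralizer S hy)
  refine ⟨hcomm', fun x hx => ?_⟩
  induction hx using Subgroup.closure_induction with
  | mem x hx => exact hpow x hx
  | one => exact one_pow p
  | mul x y hx hy hxp hyp =>
    rw [(show Commute x y from hcomm' x hx y hy).mul_pow, hxp, hyp, one_mul]
  | inv x _ hxp => rw [inv_pow, hxp, inv_one]

theorem isElementaryAbelian_omega1_center : IsElementaryAbelian p (Omega1 p (center G)) :=
  isElementaryAbelian_closure (fun _ hx y _ => (mem_center_iff.mp hx.1 y).symm) fun _ hx => hx.2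

theorem isElementaryAbelian_closure_insert_omega1_center {x : G} (hx : x ^ p = 1) :
    IsElementaryAbelian p (closure (insert x {y : G | y ∈ center G ∧ y ^ p = 1})) := by
  refine isElementaryAbelian_closure ?_ ?_
  · have hcentral : ∀ z, ∀ y ∈ {y : G | y ∈ center G ∧ y ^ p = 1}, z * y = y * z :=
      fun z _ hy => mem_center_iff.mp hy.1 z
    rintro a (rfl | ha) b (rfl | hb)
    · rfl
    · exact hcentral a b hb
    · exact (hcentral b a ha).symm
    · exact hcentral a b hb
  · rintro a (rfl | ha)
    exacts [hx, ha.2]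

theorem IsElementaryAbelian.isPGroup {E : Subgroup G} (hE : IsElementaryAbelian p E) :
    IsPGroup p E :=
  fun x => ⟨1, Subtype.ext (by simpa using hE.2 x x.2)⟩

end ElementaryAbelian

section Rank

variable {p : ℕ} [Fact p.Prime] {G : Type*} [Group G] [Finite G]

theorem bddAbove_pRank_set :
    BddAbove {n | ∃ E : Subgroup G, IsElementaryAbelian p E ∧ Nat.card E = p ^ n} := by
  refine ⟨Nat.card G, fun n ⟨E, _, hcard⟩ => ?_⟩
  calc n ≤ p ^ n := (Nat.lt_pow_self (Fact.out : p.Prime).one_lt).le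
    _ = Nat.card E := hcard.symm
    _ ≤ Nat.card G := E.card_le_card_group

theorem IsElementaryAbelian.card_le_pow_pRank {E : Subgroup G} (hE : IsElementaryAbelian p E) :
    Nat.card E ≤ p ^ pRank p G := by
  obtain ⟨n, hn⟩ := IsPGroup.iff_card.mp hE.isPGroup
  rw [hn]
  exact Nat.pow_le_pow_right (Fact.out : p.Prime).pos (le_csSup bddAbove_pRank_set ⟨E, hE, hn⟩)

theorem exists_isElementaryAbelian_card_eq_pow_pRank :
    ∃ E : Subgroup G, IsElementaryAbelian p E ∧ Nat.card E = p ^ pRank p G := by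
  have hbot : IsElementaryAbelian p (⊥ : Subgroup G) := ⟨by simp, by simp⟩
  exact Nat.sSup_mem (s := {n | ∃ E : Subgroup G, IsElementaryAbelian p E ∧ Nat.card E = p ^ n})
    ⟨0, ⊥, hbot, by simp⟩ bddAbove_pRank_set

theorem pow_pRank_le_card_omega1 (H : Subgroup G) : p ^ pRank p H ≤ Nat.card (Omega1 p H) := by
  obtain ⟨E, hE, hcard⟩ := exists_isElementaryAbelian_card_eq_pow_pRank (p := p) (G := H)
  have hmap : E.map H.subtype ≤ Omega1 p H := by
    rintro _ ⟨e, he, rfl⟩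
    exact subset_closure ⟨e.2, by simpa using congrArg H.subtype (hE.2 e he)⟩
  calc p ^ pRank p H = Nat.card (E.map H.subtype) := by
        rw [card_map_of_injective H.subtype_injective, hcard]
    _ ≤ Nat.card (Omega1 p H) := card_le_of_le hmap

end Rank

theorem mem_omega1_center_of_pow_eq_one {p : ℕ} [Fact p.Prime] {P : Type*} [Group P] [Finite P]
    (hrk : pRank p P = pRank p (center P)) {x : P} (hx : x ^ p = 1) :
    x ∈ Omega1 p (center P) := by
  set T := closure (insert x {y : P | y ∈ center P ∧ y ^ p = 1})
  have hle : Omega1 p (center P) ≤ T := closure_mono (Set.subset_insert _ _)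
  have hcard : Nat.card T ≤ Nat.card (Omega1 p (center P)) :=
    calc Nat.card T ≤ p ^ pRank p P :=
          (isElementaryAbelian_closure_insert_omega1_center hx).card_le_pow_pRank
      _ = p ^ pRank p (center P) := by rw [hrk]
      _ ≤ Nat.card (Omega1 p (center P)) := pow_pRank_le_card_omega1 (center P)
  rw [eq_of_le_of_card_ge hle hcard]
  exact subset_closure (Set.mem_insert x _)

theorem stmt_1_general {p : ℕ} [Fact p.Prime] {P : Type*} [Group P] [Finite P]
    (hrk : pRank p P = pRank p (Subgroup.center P)) :
    (IsElementaryAbelian p (Omega1 p (Subgroup.center P)) ∧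
      ∀ M : Subgroup P, IsElementaryAbelian p M →
        (∀ N : Subgroup P, IsElementaryAbelian p N → M ≤ N → N = M) →
        M = Omega1 p (Subgroup.center P)) ∧
    Omega1 p (⊤ : Subgroup P) = Omega1 p (Subgroup.center P) := by
  refine ⟨⟨isElementaryAbelian_omega1_center, fun M hM hmax => ?_⟩, ?_⟩
  · have hle : M ≤ Omega1 p (center P) := fun m hm =>
      mem_omega1_center_of_pow_eq_one hrk (hM.2 m hm)
    exact (hmax _ isElementaryAbelian_omega1_center hle).symm
  · refine le_antisymm ?_ (closure_mono fun y hy => ⟨mem_top y, hy.2⟩)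
    exact (closure_le _).mpr fun y hy => mem_omega1_center_of_pow_eq_one hrk hy.2

theorem stmt_1 {p : ℕ} [Fact p.Prime] {P : Type*} [Group P] [Finite P]
    (hP : IsPGroup p P)
    (hrk : pRank p P = pRank p (Subgroup.center P)) :
    (IsElementaryAbelian p (Omega1 p (Subgroup.center P)) ∧
      ∀ M : Subgroup P, IsElementaryAbelian p M →
        (∀ N : Subgroup P, IsElementaryAbelian p N → M ≤ N → N = M) →
        M = Omega1 p (Subgroup.center P)) ∧
    Omega1 p (⊤ : Subgroup P) = Omega1 p (Subgroup.center P) :=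
  stmt_1_general hrk
end

section
/- Let P be a finite p-group whose rank equals the rank of its center, and let P be a subgroup of a finite group G. Then Ω₁(Z(P)) is strongly closed in P with respect to G, i.e. for every g ∈ G, g·Ω₁(Z(P))·g⁻¹ ∩ P ⊆ Ω₁(Z(P)). -/
/-- `H` is strongly closed in `K` with respect to `G`: for each `g ∈ G`,
`gHg⁻¹ ∩ K ⊆ H`. -/
def IsStronglyClosed {G : Type*} [Group G] (H K : Subgroup G) : Prop :=
  ∀ g x : G, x ∈ H → g * x * g⁻¹ ∈ K → g * x * g⁻¹ ∈ H

/-!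
If `y ∈ P` has order `p` but is not central, then `y` together with `Ω₁(Z(P))` generates an
elementary abelian subgroup strictly larger than `Ω₁(Z(P))`, which is the largest elementary
abelian subgroup of `Z(P)`; hence `rk(P) > rk(Z(P))`. So under `rk(P) = rk(Z(P))` every element
of `P` of order `p` is central, and in particular so is every `G`-conjugate of an element of
`Ω₁(Z(P))` that lies in `P`.
-/

open Subgroup

section ElementaryAbelian

variable {p : ℕ} {G : Type*} [Group G]

theorem le_pRank [Finite G] (hp : 1 < p) {E : Subgroup G} {n : ℕ}
    (hE : IsElementaryAbelian p E) (hcard : Nat.card E = p ^ n) : n ≤ pRank p G := by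
  refine le_csSup ⟨Nat.card G, ?_⟩ ⟨E, hE, hcard⟩
  rintro k ⟨F, -, hF⟩
  calc k ≤ p ^ k := (Nat.lt_pow_self hp).le
    _ = Nat.card F := hF.symm
    _ ≤ Nat.card G := card_le_card_group F

theorem pRank_le_of_card_le (hp : 1 < p) {m : ℕ}
    (h : ∀ E : Subgroup G, IsElementaryAbelian p E → Nat.card E ≤ p ^ m) : pRank p G ≤ m := by
  refine csSup_le' ?_
  rintro n ⟨E, hE, hcard⟩
  exact (Nat.pow_le_pow_iff_right hp).mp (hcard ▸ h E hE)

end ElementaryAbelian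

section Omega1Center

variable {p : ℕ} {G : Type*} [Group G]

theorem mem_omega1_center {x : G} :
    x ∈ Omega1 p (center G) ↔ x ∈ center G ∧ x ^ p = 1 :=
  ⟨fun hx => ⟨closure_le _ |>.mpr (fun _ hz => hz.1) hx, isElementaryAbelian_omega1_center.2 x hx⟩,
    fun hx => subset_closure hx⟩

theorem card_le_card_omega1_center [Finite G] {E : Subgroup (center G)}
    (hE : IsElementaryAbelian p E) :
    Nat.card E ≤ Nat.card (Omega1 p (center G)) := by
  rw [← card_map_of_injective (center G).subtype_injective]
  refine card_le_of_le ?_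
  rintro _ ⟨x, hx, rfl⟩
  exact mem_omega1_center.mpr ⟨x.2, congrArg Subtype.val (hE.2 x hx)⟩

theorem mem_center_of_pRank_eq [Fact p.Prime] [Finite G]
    (hrk : pRank p G = pRank p (center G)) {y : G} (hy : y ^ p = 1) : y ∈ center G := by
  have hp : 1 < p := (Fact.out : p.Prime).one_lt
  by_contra hyZ
  let Q := Omega1 p (center G)
  let E := closure (insert y {x : G | x ∈ center G ∧ x ^ p = 1})
  have hE : IsElementaryAbelian p E := by
    refine isElementaryAbelian_closure ?_ (by rintro x (rfl | hx); exacts [hy, hx.2])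
    rintro a (rfl | ha) b (rfl | hb)
    exacts [rfl, mem_center_iff.mp hb.1 a, (mem_center_iff.mp ha.1 b).symm,
      (mem_center_iff.mp ha.1 b).symm]
  have hQE : Q < E :=
    SetLike.lt_iff_le_and_exists.mpr ⟨closure_mono (Set.subset_insert _ _), y,
      subset_closure (Set.mem_insert _ _), fun hyQ => hyZ (mem_omega1_center.mp hyQ).1⟩
  obtain ⟨m, hm⟩ :=
    IsPGroup.iff_card.mp (isElementaryAbelian_omega1_center : IsElementaryAbelian p Q).isPGroup
  obtain ⟨k, hk⟩ := IsPGroup.iff_card.mp hE.isPGroup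
  have hmk : m < k := by
    have : Nat.card Q < Nat.card E :=
      Set.Finite.card_lt_card (Set.toFinite _) (SetLike.coe_ssubset_coe.mpr hQE)
    rwa [hm, hk, Nat.pow_lt_pow_iff_right hp] at this
  have hZ : pRank p (center G) ≤ m :=
    pRank_le_of_card_le hp fun F hF => hm ▸ card_le_card_omega1_center hF
  have hG : k ≤ pRank p G := le_pRank hp hE hk
  omega

end Omega1Center

theorem stmt_2_general {p : ℕ} [Fact p.Prime] {G : Type*} [Group G] [Finite G]
    (P : Subgroup G)
    (hrk : pRank p P = pRank p (Subgroup.center P)) :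
    IsStronglyClosed (Subgroup.map P.subtype (Omega1 p (Subgroup.center P))) P := by
  rintro g _ ⟨x, hx, rfl⟩ hgx
  have hxp : (x : G) ^ p = 1 := by
    simpa using congrArg Subtype.val (mem_omega1_center.mp hx).2
  let y : P := ⟨g * x * g⁻¹, hgx⟩
  have hyp : y ^ p = 1 := Subtype.ext (by simp [y, conj_pow, hxp])
  exact ⟨y, mem_omega1_center.mpr ⟨mem_center_of_pRank_eq hrk hyp, hyp⟩, rfl⟩

theorem stmt_2 {p : ℕ} [Fact p.Prime] {G : Type*} [Group G] [Finite G]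
    (P : Subgroup G) (hP : IsPGroup p P)
    (hrk : pRank p P = pRank p (Subgroup.center P)) :
    IsStronglyClosed (Subgroup.map P.subtype (Omega1 p (Subgroup.center P))) P :=
  stmt_2_general P hrk
end

section
/- Let G be a subgroup of GL₂(𝔽_p) for an odd prime p. If O_p(G) = {1} (G has no nontrivial normal p-subgroup) and p divides |G|, then G contains a subgroup isomorphic to SL₂(𝔽_p) (indeed SL₂(𝔽_p) ⊆ G). -/
open Matrix

/-!
An element `u ∈ G` of order `p` is a transvection `1 + c • N_w`, where `N_w` is the square-zero
matrix with kernel and image the line spanned by `w`. The transvections along `w` form a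
`p`-subgroup, so if all `G`-conjugates of `u` were among them, the normal closure of `u` in `G`
would be a nontrivial normal `p`-subgroup. Hence some conjugate `v = x u x⁻¹ ∈ G` moves `w`. In the
basis `(w, (v - 1) w)` the elements `u` and `v` become `!![1, a; 0, 1]` (with `a ≠ 0`) and
`!![1, 0; 1, 1]`; over `𝔽_p` their powers are all upper and lower unitriangular matrices, which
generate `SL₂`, and `SL₂` is normal in `GL₂`.
-/

theorem Subgroup.exists_conj_notMem_of_isPGroup {Γ : Type*} [Group Γ] {p : ℕ} {G : Subgroup Γ}
    (hO : ∀ N : Subgroup G, N.Normal → IsPGroup p N → N = ⊥) {P : Subgroup Γ}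
    (hP : IsPGroup p P) {g : Γ} (hg : g ∈ G) (hg1 : g ≠ 1) : ∃ x ∈ G, x * g * x⁻¹ ∉ P := by
  by_contra! hconj
  have hle : normalClosure {(⟨g, hg⟩ : G)} ≤ P.subgroupOf G := by
    refine closure_le _ |>.mpr fun y hy => ?_
    obtain ⟨_, rfl, hy⟩ := Group.mem_conjugatesOfSet_iff.mp hy
    obtain ⟨x, rfl⟩ := isConj_iff.mp hy
    exact hconj x x.2
  have hbot := hO _ inferInstance ((hP.comap_of_injective G.subtype G.subtype_injective).to_le hle)
  have : (⟨g, hg⟩ : G) ∈ normalClosure {(⟨g, hg⟩ : G)} := subset_normalClosure rfl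
  rw [hbot, mem_bot] at this
  exact hg1 (congrArg Subtype.val this)

namespace Matrix

section SquareZero

variable {n R : Type*} [Fintype n] [DecidableEq n] [CommRing R] {N : Matrix n n R}

theorem one_add_smul_mul_one_add_smul (hN : N * N = 0) (a b : R) :
    (1 + a • N) * (1 + b • N) = 1 + (a + b) • N := by
  simp only [mul_add, add_mul, one_mul, mul_one, smul_mul_smul_comm, hN, smul_zero, add_zero,
    add_smul, add_assoc]

def unipotentHom (N : Matrix n n R) (hN : N * N = 0) : Multiplicative R →* GL n R where
  toFun c := ⟨1 + c.toAdd • N, 1 + (-c.toAdd) • N,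
    by rw [one_add_smul_mul_one_add_smul hN, add_neg_cancel, zero_smul, add_zero],
    by rw [one_add_smul_mul_one_add_smul hN, neg_add_cancel, zero_smul, add_zero]⟩
  map_one' := Units.ext <| by simp
  map_mul' a b := Units.ext <| by simp [one_add_smul_mul_one_add_smul hN]

@[simp]
theorem coe_unipotentHom (hN : N * N = 0) (c : Multiplicative R) :
    (unipotentHom N hN c : Matrix n n R) = 1 + c.toAdd • N :=
  rfl

theorem isPGroup_range_unipotentHom (p : ℕ) [CharP R p] (hN : N * N = 0) :
    IsPGroup p (unipotentHom N hN).range := by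
  have hR : IsPGroup p (Multiplicative R) := fun c =>
    ⟨1, by rw [pow_one, ← ofAdd_toAdd c, ← ofAdd_nsmul, nsmul_eq_mul, CharP.cast_eq_zero,
      zero_mul, ofAdd_zero]⟩
  exact hR.of_surjective _ (unipotentHom N hN).rangeRestrict_surjective

theorem range_unipotentHom_le {p : ℕ} [Fact p.Prime] {N : Matrix n n (ZMod p)} (hN : N * N = 0)
    {H : Subgroup (GL n (ZMod p))} {a : ZMod p} (ha : a ≠ 0)
    (h : unipotentHom N hN (.ofAdd a) ∈ H) : (unipotentHom N hN).range ≤ H := by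
  rintro _ ⟨t, rfl⟩
  have ht : t = .ofAdd a ^ (t.toAdd / a).val := by
    rw [← ofAdd_nsmul, nsmul_eq_mul, ZMod.natCast_val, ZMod.cast_id', id, div_mul_cancel₀ _ ha,
      ofAdd_toAdd]
  rw [ht, map_pow]
  exact H.pow_mem h _

theorem range_toGL_le_of_le_comap_conj {H : Subgroup (GL n R)} (Q : GL n R)
    (h : SpecialLinearGroup.toGL.range ≤ H.comap (MulAut.conj Q).toMonoidHom) :
    SpecialLinearGroup.toGL.range ≤ H := by
  rintro _ ⟨S, rfl⟩
  have hdet : (↑(Q⁻¹ * SpecialLinearGroup.toGL S * Q) : Matrix n n R).det = 1 := by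
    rw [Units.val_mul, Units.val_mul, det_mul, det_mul, mul_right_comm, ← det_mul,
      ← Units.val_mul, inv_mul_cancel, Units.val_one, det_one, one_mul]
    exact S.2
  have hX : Q⁻¹ * SpecialLinearGroup.toGL S * Q ∈ SpecialLinearGroup.toGL.range :=
    ⟨⟨_, hdet⟩, Units.ext rfl⟩
  simpa [MulAut.conj_apply, mul_assoc] using h hX

end SquareZero

theorem isNilpotent_val_sub_one {n R : Type*} [Fintype n] [DecidableEq n] [Nonempty n]
    [CommRing R] {p : ℕ} [Fact p.Prime] [CharP R p] {A : GL n R} (hA : A ^ p = 1) :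
    IsNilpotent ((A : Matrix n n R) - 1) :=
  ⟨p, by rw [sub_pow_char_of_commute (p := p) (h := Commute.one_right _),
    ← Units.val_pow_eq_pow_val, hA, Units.val_one, one_pow, sub_self]⟩

section FinTwo

variable {F : Type*} [Field F]

/-- The matrix of `v ↦ (w 1 * v 0 - w 0 * v 1) • w`: square-zero, with kernel and image the line
spanned by `w`. -/
def nilpotentAlong (w : Fin 2 → F) : Matrix (Fin 2) (Fin 2) F :=
  !![w 0 * w 1, -(w 0 * w 0); w 1 * w 1, -(w 1 * w 0)]

theorem nilpotentAlong_mul_self (w : Fin 2 → F) : nilpotentAlong w * nilpotentAlong w = 0 := by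
  ext i j; fin_cases i <;> fin_cases j <;> simp [nilpotentAlong, mul_apply] <;> ring

theorem exists_eq_smul_nilpotentAlong_of_mulVec_eq_zero {N : Matrix (Fin 2) (Fin 2) F}
    (hN : IsNilpotent N) {w : Fin 2 → F} (hw : w ≠ 0) (hNw : N *ᵥ w = 0) :
    ∃ c : F, N = c • nilpotentAlong w := by
  have htr : N 0 0 + N 1 1 = 0 := by
    rw [← trace_fin_two]; exact (isNilpotent_trace_of_isNilpotent hN).eq_zero
  have h0 : N 0 0 * w 0 + N 0 1 * w 1 = 0 := by simpa [mulVec, dotProduct] using congrFun hNw 0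
  have h1 : N 1 0 * w 0 + N 1 1 * w 1 = 0 := by simpa [mulVec, dotProduct] using congrFun hNw 1
  by_cases hw0 : w 0 = 0
  · have hw1 : w 1 ≠ 0 := fun hw1 => hw (by ext i; fin_cases i <;> simp [hw0, hw1])
    have h01 : N 0 1 = 0 := by simpa [hw0, hw1] using h0
    have h11 : N 1 1 = 0 := by simpa [hw0, hw1] using h1
    have h00 : N 0 0 = 0 := by linear_combination htr - h11
    refine ⟨N 1 0 / (w 1 * w 1), ?_⟩
    ext i j; fin_cases i <;> fin_cases j <;> simp [nilpotentAlong, hw0, h00, h01, h11, hw1]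
  · refine ⟨-N 0 1 / (w 0 * w 0), ?_⟩
    ext i j; fin_cases i <;> fin_cases j <;> simp [nilpotentAlong] <;> field_simp
    · linear_combination h0
    · linear_combination w 0 * h1 - w 0 * w 1 * htr + w 1 * h0
    · linear_combination w 0 * htr - h0

theorem exists_eq_smul_nilpotentAlong {N : Matrix (Fin 2) (Fin 2) F} (hN : IsNilpotent N) :
    ∃ w ≠ 0, ∃ c : F, N = c • nilpotentAlong w := by
  obtain ⟨k, hk⟩ := hN
  have hdet : N.det = 0 := eq_zero_of_pow_eq_zero (by rw [← det_pow, hk, det_zero])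
  obtain ⟨w, hw, hNw⟩ := exists_mulVec_eq_zero_iff.mpr hdet
  exact ⟨w, hw, exists_eq_smul_nilpotentAlong_of_mulVec_eq_zero ⟨k, hk⟩ hw hNw⟩

theorem mul_self_eq_zero_of_isNilpotent {N : Matrix (Fin 2) (Fin 2) F} (hN : IsNilpotent N) :
    N * N = 0 := by
  obtain ⟨w, -, c, rfl⟩ := exists_eq_smul_nilpotentAlong hN
  rw [smul_mul_smul_comm, nilpotentAlong_mul_self, smul_zero]

theorem det_cols_mulVec_ne_zero {M : Matrix (Fin 2) (Fin 2) F} (hM : M * M = 0) {w : Fin 2 → F}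
    (hMw : M *ᵥ w ≠ 0) : !![w 0, (M *ᵥ w) 0; w 1, (M *ᵥ w) 1].det ≠ 0 := by
  intro hdet
  obtain ⟨v, hv, hQv⟩ := exists_mulVec_eq_zero_iff.mpr hdet
  have hcomb : v 0 • w + v 1 • M *ᵥ w = 0 := by
    rw [← hQv]; ext i; fin_cases i <;> simp [mulVec, dotProduct] <;> ring
  have h0 : v 0 = 0 := by
    have := congrArg (M *ᵥ ·) hcomb
    simp only [mulVec_add, mulVec_smul, mulVec_mulVec, hM, zero_mulVec, smul_zero, add_zero,
      mulVec_zero] at this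
    exact (smul_eq_zero.mp this).resolve_right hMw
  have h1 : v 1 = 0 := by
    rw [h0, zero_smul, zero_add] at hcomb
    exact (smul_eq_zero.mp hcomb).resolve_right hMw
  exact hv (by ext i; fin_cases i <;> simp [h0, h1])

theorem mul_cols_mulVec {M : Matrix (Fin 2) (Fin 2) F} (hM : M * M = 0) (w : Fin 2 → F) :
    M * !![w 0, (M *ᵥ w) 0; w 1, (M *ᵥ w) 1] =
      !![w 0, (M *ᵥ w) 0; w 1, (M *ᵥ w) 1] * !![0, 0; 1, 0] := by
  have h2 : M *ᵥ (M *ᵥ w) = 0 := by rw [mulVec_mulVec, hM, zero_mulVec]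
  ext i j; fin_cases i <;> fin_cases j <;> simp [mul_apply]
  · simpa [mulVec, dotProduct] using congrFun h2 0
  · simpa [mulVec, dotProduct] using congrFun h2 1

theorem strictUpper_mul_self : !![0, 1; 0, 0] * !![0, 1; 0, 0] =
    (0 : Matrix (Fin 2) (Fin 2) F) := by
  ext i j; fin_cases i <;> fin_cases j <;> simp

theorem strictLower_mul_self : !![0, 0; 1, 0] * !![0, 0; 1, 0] =
    (0 : Matrix (Fin 2) (Fin 2) F) := by
  ext i j; fin_cases i <;> fin_cases j <;> simp

def upperHom : Multiplicative F →* GL (Fin 2) F := unipotentHom _ strictUpper_mul_self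

def lowerHom : Multiplicative F →* GL (Fin 2) F := unipotentHom _ strictLower_mul_self

theorem conj_upperHom_eq {Q A : GL (Fin 2) F} {w v : Fin 2 → F}
    (hQ : (Q : Matrix (Fin 2) (Fin 2) F) = !![w 0, v 0; w 1, v 1]) {c : F}
    (hA : (A : Matrix (Fin 2) (Fin 2) F) - 1 = c • nilpotentAlong w) :
    MulAut.conj Q (upperHom (.ofAdd (c * -(Q : Matrix (Fin 2) (Fin 2) F).det))) = A := by
  rw [MulAut.conj_apply, mul_inv_eq_iff_eq_mul]
  ext i j
  rw [sub_eq_iff_eq_add'] at hA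
  fin_cases i <;> fin_cases j <;>
    simp [upperHom, hA, hQ, nilpotentAlong, mul_apply, det_fin_two] <;> ring

theorem conj_lowerHom_eq {Q A : GL (Fin 2) F} {w : Fin 2 → F}
    (hA : ((A : Matrix (Fin 2) (Fin 2) F) - 1) * (A - 1) = 0)
    (hQ : (Q : Matrix (Fin 2) (Fin 2) F) = !![w 0, ((A - 1 : Matrix (Fin 2) (Fin 2) F) *ᵥ w) 0;
      w 1, ((A - 1 : Matrix (Fin 2) (Fin 2) F) *ᵥ w) 1]) :
    MulAut.conj Q (lowerHom (.ofAdd 1)) = A := by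
  rw [MulAut.conj_apply, mul_inv_eq_iff_eq_mul]
  ext : 1
  have := mul_cols_mulVec hA w
  rw [← hQ, sub_mul, one_mul, sub_eq_iff_eq_add'] at this
  simp [lowerHom, mul_add, this]

theorem exists_eq_upperHom_mul_lowerHom_mul_upperHom {S : GL (Fin 2) F}
    (hS : (S : Matrix (Fin 2) (Fin 2) F).det = 1) (h10 : (S : Matrix (Fin 2) (Fin 2) F) 1 0 ≠ 0) :
    ∃ x y z, S = upperHom x * lowerHom y * upperHom z := by
  rw [det_fin_two] at hS
  refine ⟨.ofAdd ((S 0 0 - 1) / S 1 0), .ofAdd (S 1 0), .ofAdd ((S 1 1 - 1) / S 1 0), ?_⟩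
  ext i j
  fin_cases i <;> fin_cases j <;> simp [upperHom, lowerHom, mul_apply] <;> field_simp
  · ring
  · linear_combination -hS
  · ring

theorem exists_eq_lowerHom_mul_upperHom_mul_lowerHom_mul_upperHom {S : GL (Fin 2) F}
    (hS : (S : Matrix (Fin 2) (Fin 2) F).det = 1) :
    ∃ r x y z, S = lowerHom r * upperHom x * lowerHom y * upperHom z := by
  by_cases h10 : (S : Matrix (Fin 2) (Fin 2) F) 1 0 = 0
  · have h00 : (S : Matrix (Fin 2) (Fin 2) F) 0 0 ≠ 0 := by
      rintro h00; simp [det_fin_two, h00, h10] at hS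
    obtain ⟨x, y, z, h⟩ := exists_eq_upperHom_mul_lowerHom_mul_upperHom
      (S := lowerHom (.ofAdd 1) * S) (by simp [lowerHom, det_mul, hS, det_fin_two])
      (by simpa [lowerHom, mul_apply, h10] using h00)
    refine ⟨.ofAdd (-1), x, y, z, ?_⟩
    rw [mul_assoc _ (upperHom x), mul_assoc, mul_assoc, ← mul_assoc (upperHom x), ← h,
      ← mul_assoc, ← map_mul, ← ofAdd_add, neg_add_cancel, ofAdd_zero, map_one, one_mul]
  · obtain ⟨x, y, z, h⟩ := exists_eq_upperHom_mul_lowerHom_mul_upperHom hS h10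
    exact ⟨1, x, y, z, by rw [map_one, one_mul, h]⟩

theorem range_toGL_le {H : Subgroup (GL (Fin 2) F)} (hU : upperHom.range ≤ H)
    (hL : lowerHom.range ≤ H) : SpecialLinearGroup.toGL.range ≤ H := by
  rintro _ ⟨S, rfl⟩
  obtain ⟨r, x, y, z, h⟩ :=
    exists_eq_lowerHom_mul_upperHom_mul_lowerHom_mul_upperHom (S := SpecialLinearGroup.toGL S) S.2
  rw [h]
  exact mul_mem (mul_mem (mul_mem (hL ⟨r, rfl⟩) (hU ⟨x, rfl⟩)) (hL ⟨y, rfl⟩)) (hU ⟨z, rfl⟩)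

theorem range_toGL_le_of_unipotent_mem {p : ℕ} [Fact p.Prime] {G : Subgroup (GL (Fin 2) (ZMod p))}
    {u v : GL (Fin 2) (ZMod p)} (huG : u ∈ G) (hvG : v ∈ G) {w : Fin 2 → ZMod p} {c : ZMod p}
    (hc : c ≠ 0) (hu : (u : Matrix (Fin 2) (Fin 2) (ZMod p)) - 1 = c • nilpotentAlong w)
    (hv : IsNilpotent ((v : Matrix (Fin 2) (Fin 2) (ZMod p)) - 1))
    (hvw : ((v : Matrix (Fin 2) (Fin 2) (ZMod p)) - 1) *ᵥ w ≠ 0) :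
    SpecialLinearGroup.toGL.range ≤ G := by
  have hv2 := mul_self_eq_zero_of_isNilpotent hv
  have hdet := det_cols_mulVec_ne_zero hv2 hvw
  set Q := GeneralLinearGroup.mkOfDetNeZero _ hdet
  have hU :
      MulAut.conj Q (upperHom (.ofAdd (c * -(Q : Matrix (Fin 2) (Fin 2) (ZMod p)).det))) ∈ G := by
    rwa [conj_upperHom_eq rfl hu]
  have hL : MulAut.conj Q (lowerHom (.ofAdd 1)) ∈ G := by
    rwa [conj_lowerHom_eq hv2 rfl]
  exact range_toGL_le_of_le_comap_conj Q <| range_toGL_le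
    (range_unipotentHom_le _ (mul_ne_zero hc (neg_ne_zero.mpr hdet)) hU)
    (range_unipotentHom_le _ one_ne_zero hL)

end FinTwo

end Matrix

theorem stmt_4_general {p : ℕ} [Fact p.Prime]
    (G : Subgroup (GL (Fin 2) (ZMod p)))
    (hO : ∀ N : Subgroup G, N.Normal → IsPGroup p N → N = ⊥)
    (hdvd : p ∣ Nat.card G) :
    (SpecialLinearGroup.toGL (n := Fin 2) (R := ZMod p)).range ≤ G := by
  obtain ⟨⟨u, huG⟩, hu⟩ := exists_prime_orderOf_dvd_card' p hdvd
  rw [Subgroup.orderOf_mk] at hu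
  have hu1 : u ≠ 1 := by
    rintro rfl
    exact (Fact.out : p.Prime).one_lt.ne (orderOf_one.symm.trans hu)
  have hup : u ^ p = 1 := orderOf_dvd_iff_pow_eq_one.mp hu.dvd
  obtain ⟨w, hw, c, hc⟩ := exists_eq_smul_nilpotentAlong (isNilpotent_val_sub_one hup)
  have hc0 : c ≠ 0 := by
    rintro rfl
    exact hu1 (Units.ext (sub_eq_zero.mp (hc.trans (zero_smul _ _))))
  obtain ⟨x, hxG, hxP⟩ := Subgroup.exists_conj_notMem_of_isPGroup hO
    (isPGroup_range_unipotentHom p (nilpotentAlong_mul_self w)) huG hu1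
  have hv : IsNilpotent ((↑(x * u * x⁻¹) : Matrix (Fin 2) (Fin 2) (ZMod p)) - 1) :=
    isNilpotent_val_sub_one (by rw [conj_pow, hup, mul_one, mul_inv_cancel])
  refine range_toGL_le_of_unipotent_mem huG (G.mul_mem (G.mul_mem hxG huG) (G.inv_mem hxG))
    hc0 hc hv fun hvw => ?_
  obtain ⟨c', hc'⟩ := exists_eq_smul_nilpotentAlong_of_mulVec_eq_zero hv hw hvw
  exact hxP ⟨.ofAdd c', Units.ext (by simp [← hc'])⟩

theorem stmt_4 {p : ℕ} [Fact p.Prime] (hodd : Odd p)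
    (G : Subgroup (GL (Fin 2) (ZMod p)))
    (hO : ∀ N : Subgroup G, N.Normal → IsPGroup p N → N = ⊥)
    (hdvd : p ∣ Nat.card G) :
    (SpecialLinearGroup.toGL (n := Fin 2) (R := ZMod p)).range ≤ G :=
  stmt_4_general G hO hdvd
end

section
/- Let S be the wreathed 2-group generated by x, y, z with relations x^{2ⁿ} = y^{2ⁿ} = z² = 1, xy = yx, zxz⁻¹ = y (n ≥ 2). Define the degree-3 complex representation κ of S by κ(x) = diag(α, α, α⁻²), κ(y) = diag(α, α⁻², α), and κ(z) the matrix fixing the first basis vector up to sign −1 and swapping the other two, where α is a primitive 2ⁿ-th root of unity. Then κ is a well-defined group homomorphism S → GL₃(ℂ), and its character ν satisfies ν(g) = −1 for every involution g ∈ S. -/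
/-!
Since `z` conjugates `x` to `y` and `y` to `x`, every element of a group generated by `x, y, z`
subject to the relations of `ℤ/N ≀ ℤ/2` is a word `x ^ a * y ^ b * z ^ e` with `a, b < N`,
`e < 2`; so such a group has at most `2 N²` elements, and in `S`, which has exactly that many,
these words are pairwise distinct. The subgroup of `S × GL₃(ℂ)` generated by the pairs
`(x, κ x)`, `(y, κ y)`, `(z, κ z)` also satisfies the relations, so its projection onto `S` is a
surjection between groups of the same order, hence an isomorphism, and `κ` is read off from its
inverse.

An involution is either `x ^ a * y ^ b` with `N ∣ 2a`, `N ∣ 2b`, where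
`κ = diag(uv, u, v)` for signs `u = α ^ a`, `v = α ^ b` not both `1`, so the trace is
`(u + 1)(v + 1) - 1 = -1`; or `x ^ a * y ^ b * z` with `N ∣ a + b`, where the trace is
`-α ^ (a + b) = -1`.
-/

open Matrix

open Subgroup in
theorem exists_monoidHom_of_card_closure_le {G H : Type*} [Group G] [Group H] (P : Set (G × H))
    (hgen : closure (Prod.fst '' P) = ⊤) [Finite (closure P)]
    (hcard : Nat.card (closure P) ≤ Nat.card G) : ∃ φ : G →* H, ∀ p ∈ P, φ p.1 = p.2 := by
  set π := (MonoidHom.fst G H).domRestrict (closure P)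
  have hπ : Function.Surjective π := by
    rw [← MonoidHom.range_eq_top, MonoidHom.domRestrict_range, MonoidHom.map_closure]
    exact hgen
  let e := MulEquiv.ofBijective π (hπ.bijective_of_nat_card_le hcard)
  refine ⟨((MonoidHom.snd G H).domRestrict (closure P)).comp e.symm.toMonoidHom, fun p hp => ?_⟩
  have hp' : e.symm p.1 = ⟨p, subset_closure hp⟩ := e.symm_apply_eq.mpr rfl
  simp [hp']

theorem pow_sub_one_eq_inv_of_pow_eq_one {G : Type*} [Group G] {N : ℕ} (hN : N ≠ 0) {g : G}
    (hg : g ^ N = 1) : g ^ (N - 1) = g⁻¹ :=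
  (inv_eq_of_mul_eq_one_right (by rw [mul_pow_sub_one hN, hg])).symm

/-- The defining relations of the wreath product `ℤ/N ≀ ℤ/2 = (ℤ/N × ℤ/N) ⋊ ℤ/2`;
`y ^ N = 1` follows from them. -/
structure WreathRelations {G : Type*} [Group G] (N : ℕ) (x y z : G) : Prop where
  pow_eq_one_left : x ^ N = 1
  sq_eq_one : z ^ 2 = 1
  commute : Commute x y
  conj_eq : z * x * z⁻¹ = y

def wreathWord {G : Type*} [Group G] (x y z : G) (a b e : ℕ) : G := x ^ a * y ^ b * z ^ e

namespace WreathRelations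

open Subgroup

variable {G H : Type*} [Group G] [Group H] {N : ℕ} {x y z : G}

theorem prod {x' y' z' : H} (h : WreathRelations N x y z) (h' : WreathRelations N x' y' z') :
    WreathRelations N (x, x') (y, y') (z, z') where
  pow_eq_one_left := Prod.ext h.pow_eq_one_left h'.pow_eq_one_left
  sq_eq_one := Prod.ext h.sq_eq_one h'.sq_eq_one
  commute := Commute.prod h.commute h'.commute
  conj_eq := Prod.ext h.conj_eq h'.conj_eq

theorem inv_eq_self (h : WreathRelations N x y z) : z⁻¹ = z :=
  inv_eq_of_mul_eq_one_right (by rw [← sq, h.sq_eq_one])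

theorem pow_eq_one_right (h : WreathRelations N x y z) : y ^ N = 1 := by
  rw [← h.conj_eq, conj_pow, h.pow_eq_one_left, mul_one, mul_inv_cancel]

theorem semiconjBy_left (h : WreathRelations N x y z) : SemiconjBy z x y := by
  rw [SemiconjBy, ← h.conj_eq, inv_mul_cancel_right]

theorem semiconjBy_right (h : WreathRelations N x y z) : SemiconjBy z y x := by
  have hzz : z * z = 1 := by rw [← sq, h.sq_eq_one]
  rw [SemiconjBy, ← h.conj_eq, h.inv_eq_self, ← mul_assoc, ← mul_assoc, hzz, one_mul]

theorem mul_pow_mul_pow (h : WreathRelations N x y z) (c d : ℕ) :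
    z * (x ^ c * y ^ d) = x ^ d * y ^ c * z := by
  rw [((h.semiconjBy_left.pow_right c).mul_right (h.semiconjBy_right.pow_right d)).eq,
    ← (h.commute.pow_pow d c).eq]

theorem exists_pow_mul_pow_mul_pow (h : WreathRelations N x y z) (e c d : ℕ) :
    ∃ c' d' : ℕ, z ^ e * (x ^ c * y ^ d) = x ^ c' * y ^ d' * z ^ e := by
  induction e generalizing c d with
  | zero => exact ⟨c, d, by simp⟩
  | succ e ih =>
    obtain ⟨c', d', hcd⟩ := ih d c
    exact ⟨c', d', by rw [pow_succ, mul_assoc, h.mul_pow_mul_pow, ← mul_assoc, hcd, mul_assoc]⟩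

theorem exists_wreathWord_mul (h : WreathRelations N x y z) (a b e c d f : ℕ) :
    ∃ a' b' e', wreathWord x y z a b e * wreathWord x y z c d f = wreathWord x y z a' b' e' := by
  obtain ⟨c', d', hcd⟩ := h.exists_pow_mul_pow_mul_pow e c d
  refine ⟨a + c', b + d', e + f, ?_⟩
  calc x ^ a * y ^ b * z ^ e * (x ^ c * y ^ d * z ^ f)
      = x ^ a * y ^ b * (z ^ e * (x ^ c * y ^ d)) * z ^ f := by simp only [mul_assoc]
    _ = x ^ a * (y ^ b * x ^ c') * y ^ d' * (z ^ e * z ^ f) := by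
        rw [hcd]; simp only [mul_assoc]
    _ = x ^ a * (x ^ c' * y ^ b) * y ^ d' * (z ^ e * z ^ f) := by
        rw [(h.commute.pow_pow c' b).eq]
    _ = _ := by simp only [wreathWord, pow_add, mul_assoc]

theorem exists_wreathWord_of_mem_closure [NeZero N] (h : WreathRelations N x y z) {g : G}
    (hg : g ∈ closure {x, y, z}) : ∃ a b e, g = wreathWord x y z a b e := by
  induction hg using closure_induction'' with
  | mem g hg =>
    rcases hg with rfl | rfl | rfl
    exacts [⟨1, 0, 0, by simp [wreathWord]⟩, ⟨0, 1, 0, by simp [wreathWord]⟩,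
      ⟨0, 0, 1, by simp [wreathWord]⟩]
  | inv_mem g hg =>
    have hx := pow_sub_one_eq_inv_of_pow_eq_one (NeZero.ne N) h.pow_eq_one_left
    have hy := pow_sub_one_eq_inv_of_pow_eq_one (NeZero.ne N) h.pow_eq_one_right
    rcases hg with rfl | rfl | rfl
    exacts [⟨N - 1, 0, 0, by simp [wreathWord, hx]⟩, ⟨0, N - 1, 0, by simp [wreathWord, hy]⟩,
      ⟨0, 0, 1, by simp [wreathWord, h.inv_eq_self]⟩]
  | one => exact ⟨0, 0, 0, by simp [wreathWord]⟩
  | mul g g' _ _ hg hg' =>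
    obtain ⟨a, b, e, rfl⟩ := hg
    obtain ⟨c, d, f, rfl⟩ := hg'
    exact h.exists_wreathWord_mul a b e c d f

theorem wreathWord_mod (h : WreathRelations N x y z) (a b e : ℕ) :
    wreathWord x y z (a % N) (b % N) (e % 2) = wreathWord x y z a b e := by
  simp only [wreathWord, ← pow_eq_pow_mod _ h.pow_eq_one_left,
    ← pow_eq_pow_mod _ h.pow_eq_one_right, ← pow_eq_pow_mod _ h.sq_eq_one]

theorem closure_subset_range_wreathWord [NeZero N] (h : WreathRelations N x y z) :
    (closure {x, y, z} : Set G) ⊆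
      Set.range fun p : Fin N × Fin N × Fin 2 => wreathWord x y z p.1 p.2.1 p.2.2 := by
  intro g hg
  obtain ⟨a, b, e, rfl⟩ := h.exists_wreathWord_of_mem_closure hg
  exact ⟨(⟨a % N, Nat.mod_lt _ (NeZero.pos N)⟩, ⟨b % N, Nat.mod_lt _ (NeZero.pos N)⟩,
    ⟨e % 2, Nat.mod_lt _ two_pos⟩), h.wreathWord_mod a b e⟩

theorem finite_closure [NeZero N] (h : WreathRelations N x y z) :
    Finite (closure {x, y, z}) :=
  ((Set.finite_range _).subset h.closure_subset_range_wreathWord).to_subtype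

theorem card_closure_le [NeZero N] (h : WreathRelations N x y z) :
    Nat.card (closure {x, y, z}) ≤ N * N * 2 := by
  calc Nat.card (closure {x, y, z})
      ≤ Nat.card (Set.range fun p : Fin N × Fin N × Fin 2 => wreathWord x y z p.1 p.2.1 p.2.2) :=
        Nat.card_mono (Set.finite_range _) h.closure_subset_range_wreathWord
    _ ≤ Nat.card (Fin N × Fin N × Fin 2) := Finite.card_range_le _
    _ = N * N * 2 := by simp [mul_assoc]

theorem exists_monoidHom [NeZero N] (h : WreathRelations N x y z)
    (hgen : closure {x, y, z} = ⊤) (hcard : Nat.card G = N * N * 2) {x' y' z' : H}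
    (h' : WreathRelations N x' y' z') : ∃ φ : G →* H, φ x = x' ∧ φ y = y' ∧ φ z = z' := by
  have := (h.prod h').finite_closure
  obtain ⟨φ, hφ⟩ := exists_monoidHom_of_card_closure_le {(x, x'), (y, y'), (z, z')}
    (by simpa [Set.image_insert_eq] using hgen) (hcard ▸ (h.prod h').card_closure_le)
  exact ⟨φ, hφ (x, x') (by simp), hφ (y, y') (by simp), hφ (z, z') (by simp)⟩

theorem dvd_of_wreathWord_eq_one [NeZero N] (h : WreathRelations N x y z)
    (hgen : closure {x, y, z} = ⊤) (hcard : Nat.card G = N * N * 2) {a b e : ℕ}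
    (he : wreathWord x y z a b e = 1) : N ∣ a ∧ N ∣ b ∧ 2 ∣ e := by
  set f := fun p : Fin N × Fin N × Fin 2 => wreathWord x y z p.1 p.2.1 p.2.2
  have hf : Function.Surjective f := fun g =>
    h.closure_subset_range_wreathWord (by simp [hgen])
  have hinj := (hf.bijective_of_nat_card_le (by simp [hcard, mul_assoc])).injective
  have key : f (⟨a % N, Nat.mod_lt _ (NeZero.pos N)⟩, ⟨b % N, Nat.mod_lt _ (NeZero.pos N)⟩,
      ⟨e % 2, Nat.mod_lt _ two_pos⟩) = f (0, 0, 0) := by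
    simp only [f, h.wreathWord_mod, he]
    simp [wreathWord]
  simp only [hinj.eq_iff, Prod.mk.injEq, Fin.ext_iff, Fin.val_zero] at key
  exact ⟨Nat.dvd_of_mod_eq_zero key.1, Nat.dvd_of_mod_eq_zero key.2.1,
    Nat.dvd_of_mod_eq_zero key.2.2⟩

theorem wreathWord_eq_one (h : WreathRelations N x y z) {a b : ℕ} (ha : N ∣ a) (hb : N ∣ b) :
    wreathWord x y z a b 0 = 1 := by
  obtain ⟨a, rfl⟩ := ha
  obtain ⟨b, rfl⟩ := hb
  simp [wreathWord, pow_mul, h.pow_eq_one_left, h.pow_eq_one_right]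

theorem wreathWord_zero_sq (h : WreathRelations N x y z) (a b : ℕ) :
    wreathWord x y z a b 0 ^ 2 = wreathWord x y z (2 * a) (2 * b) 0 := by
  simp [wreathWord, (h.commute.pow_pow a b).mul_pow, pow_mul']

theorem wreathWord_one_sq (h : WreathRelations N x y z) (a b : ℕ) :
    wreathWord x y z a b 1 ^ 2 = wreathWord x y z (a + b) (a + b) 0 := by
  calc (x ^ a * y ^ b * z ^ 1) ^ 2 = x ^ a * y ^ b * (z * (x ^ a * y ^ b)) * z := by
        simp only [sq, pow_one, mul_assoc]
    _ = x ^ a * (y ^ b * x ^ b) * y ^ a * (z * z) := by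
        simp only [h.mul_pow_mul_pow, mul_assoc]
    _ = x ^ (a + b) * y ^ (a + b) * z ^ 0 := by
        rw [← (h.commute.pow_pow b b).eq, ← sq z, h.sq_eq_one]
        simp only [pow_add, mul_assoc, mul_one, pow_zero, (Commute.pow_pow_self y b a).eq]

theorem involution_cases [NeZero N] (h : WreathRelations N x y z)
    (hgen : closure {x, y, z} = ⊤) (hcard : Nat.card G = N * N * 2) {a b e : ℕ} (he : e < 2)
    (hsq : wreathWord x y z a b e ^ 2 = 1) (hne : wreathWord x y z a b e ≠ 1) :
    (e = 0 ∧ N ∣ 2 * a ∧ N ∣ 2 * b ∧ ¬(N ∣ a ∧ N ∣ b)) ∨ (e = 1 ∧ N ∣ a + b) := by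
  interval_cases e
  · rw [h.wreathWord_zero_sq] at hsq
    obtain ⟨h2a, h2b, -⟩ := h.dvd_of_wreathWord_eq_one hgen hcard hsq
    exact Or.inl ⟨rfl, h2a, h2b, fun ⟨ha, hb⟩ => hne (h.wreathWord_eq_one ha hb)⟩
  · rw [h.wreathWord_one_sq] at hsq
    exact Or.inr ⟨rfl, (h.dvd_of_wreathWord_eq_one hgen hcard hsq).1⟩

end WreathRelations

theorem diagonal_pow_mul_diagonal_pow {R : Type*} [CommSemiring R] (p q r p' q' r' : R)
    (a b : ℕ) :
    diagonal ![p, q, r] ^ a * diagonal ![p', q', r'] ^ b =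
      diagonal ![p ^ a * p' ^ b, q ^ a * q' ^ b, r ^ a * r' ^ b] := by
  rw [diagonal_pow, diagonal_pow, diagonal_mul_diagonal]
  congr 1
  ext i
  fin_cases i <;> rfl

def swapMatrix (R : Type*) [Ring R] : Matrix (Fin 3) (Fin 3) R := !![-1, 0, 0; 0, 0, 1; 0, 1, 0]

section swapMatrix

variable {R : Type*} [Ring R]

theorem swapMatrix_mul_self : swapMatrix R * swapMatrix R = 1 := by
  rw [swapMatrix, mul_fin_three, one_fin_three]
  norm_num

theorem swapMatrix_mul_diagonal_mul_swapMatrix (p q r : R) :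
    swapMatrix R * diagonal ![p, q, r] * swapMatrix R = diagonal ![p, r, q] := by
  rw [swapMatrix, diagonal_fin_three, diagonal_fin_three, mul_fin_three, mul_fin_three]
  simp

theorem trace_diagonal_mul_swapMatrix (p q r : R) :
    trace (diagonal ![p, q, r] * swapMatrix R) = -p := by
  simp [swapMatrix, trace_fin_three, mul_apply, Fin.sum_univ_three]

end swapMatrix

section Representation

variable {K : Type*} [Field K] {N : ℕ} {α : K}

theorem exists_wreathRelations_GL [NeZero N] (hα : α ^ N = 1) :
    ∃ X Y Z : GL (Fin 3) K, WreathRelations N X Y Z ∧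
      (X : Matrix (Fin 3) (Fin 3) K) = diagonal ![α, α, α⁻¹ ^ 2] ∧
      (Y : Matrix (Fin 3) (Fin 3) K) = diagonal ![α, α⁻¹ ^ 2, α] ∧
      (Z : Matrix (Fin 3) (Fin 3) K) = swapMatrix K := by
  have hA : diagonal ![α, α, α⁻¹ ^ 2] ^ N = 1 := by
    have hβ : (α⁻¹ ^ 2) ^ N = 1 := by
      rw [← pow_mul, mul_comm, pow_mul, inv_pow, hα, inv_one, one_pow]
    rw [diagonal_pow, ← diagonal_one]
    congr 1
    ext i
    fin_cases i
    exacts [hα, hα, hβ]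
  have hC : swapMatrix K ^ 2 = 1 := by rw [sq, swapMatrix_mul_self]
  set X := Units.ofPowEqOne _ N hA (NeZero.ne N)
  set Z := Units.ofPowEqOne _ 2 hC two_ne_zero
  have hZ : Z⁻¹ = Z := inv_eq_of_mul_eq_one_right (by rw [← sq]; exact Units.pow_ofPowEqOne _ _)
  have hY : ((Z * X * Z⁻¹ : GL (Fin 3) K) : Matrix (Fin 3) (Fin 3) K) =
      diagonal ![α, α⁻¹ ^ 2, α] := by
    rw [hZ, Units.val_mul, Units.val_mul]
    exact swapMatrix_mul_diagonal_mul_swapMatrix α α (α⁻¹ ^ 2)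
  refine ⟨X, Z * X * Z⁻¹, Z, ⟨Units.pow_ofPowEqOne _ _, Units.pow_ofPowEqOne _ _, ?_, rfl⟩,
    rfl, hY, rfl⟩
  exact Commute.units_of_val (by rw [hY]; exact commute_diagonal _ _)

theorem trace_diagonal_pow_mul_diagonal_pow_eq_neg_one (hα : IsPrimitiveRoot α N) {a b : ℕ}
    (h2a : N ∣ 2 * a) (h2b : N ∣ 2 * b) (hab : ¬(N ∣ a ∧ N ∣ b)) :
    trace (diagonal ![α, α, α⁻¹ ^ 2] ^ a * diagonal ![α, α⁻¹ ^ 2, α] ^ b) = -1 := by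
  have hsq {c : ℕ} (hc : N ∣ 2 * c) : (α ^ c) ^ 2 = 1 := by
    rw [← pow_mul, mul_comm, hα.pow_eq_one_iff_dvd]; exact hc
  have hβ {c : ℕ} (hc : N ∣ 2 * c) : (α⁻¹ ^ 2) ^ c = 1 := by
    rw [← pow_mul, inv_pow, mul_comm 2 c, pow_mul, hsq hc, inv_one]
  have hu := hsq h2a
  have hv := hsq h2b
  rw [diagonal_pow_mul_diagonal_pow, hβ h2a, hβ h2b, trace_diagonal, Fin.sum_univ_three]
  change α ^ a * α ^ b + α ^ a * 1 + 1 * α ^ b = -1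
  rw [← hα.pow_eq_one_iff_dvd, ← hα.pow_eq_one_iff_dvd, not_and_or] at hab
  rw [sq_eq_one_iff] at hu hv
  rcases hab with ha | hb
  · linear_combination (α ^ b + 1) * hu.resolve_left ha
  · linear_combination (α ^ a + 1) * hv.resolve_left hb

theorem trace_diagonal_pow_mul_diagonal_pow_mul_swapMatrix_eq_neg_one (hα : α ^ N = 1)
    {a b : ℕ} (hab : N ∣ a + b) :
    trace (diagonal ![α, α, α⁻¹ ^ 2] ^ a * diagonal ![α, α⁻¹ ^ 2, α] ^ b * swapMatrix K) =
      -1 := by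
  obtain ⟨k, hk⟩ := hab
  rw [diagonal_pow_mul_diagonal_pow, trace_diagonal_mul_swapMatrix, ← pow_add, hk, pow_mul, hα,
    one_pow]

end Representation

theorem stmt_12_general {S : Type} [Group S] (n : ℕ)
    -- `S` is the wreathed 2-group of order `2^(2n+1)`
    (hcard : Nat.card S = 2 ^ (2 * n + 1))
    (x y z : S) (hgen : Subgroup.closure {x, y, z} = ⊤)
    (hx : x ^ 2 ^ n = 1) (hz : z ^ 2 = 1)
    (hcomm : x * y = y * x) (hconj : z * x * z⁻¹ = y)
    -- `α` is a primitive `2^n`-th root of unity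
    (α : ℂ) (hα : IsPrimitiveRoot α (2 ^ n)) :
    -- `κ` is a well-defined homomorphism `S → GL₃(ℂ)` with the prescribed values
    ∃ κ : S →* GL (Fin 3) ℂ,
      (κ x : Matrix (Fin 3) (Fin 3) ℂ) = Matrix.diagonal ![α, α, α⁻¹ ^ 2] ∧
      (κ y : Matrix (Fin 3) (Fin 3) ℂ) = Matrix.diagonal ![α, α⁻¹ ^ 2, α] ∧
      (κ z : Matrix (Fin 3) (Fin 3) ℂ) = !![-1, 0, 0; 0, 0, 1; 0, 1, 0] ∧
      -- the character `ν = tr ∘ κ` takes the value `-1` on every involution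
      ∀ g : S, orderOf g = 2 → Matrix.trace (κ g : Matrix (Fin 3) (Fin 3) ℂ) = -1 := by
  have hS : WreathRelations (2 ^ n) x y z := ⟨hx, hz, hcomm, hconj⟩
  have hcardN : Nat.card S = 2 ^ n * 2 ^ n * 2 := by rw [hcard]; ring
  obtain ⟨X, Y, Z, hXYZ, hX, hY, hZ⟩ := exists_wreathRelations_GL hα.pow_eq_one
  obtain ⟨κ, hκx, hκy, hκz⟩ := hS.exists_monoidHom hgen hcardN hXYZ
  refine ⟨κ, hκx ▸ hX, hκy ▸ hY, hκz ▸ hZ, fun g hg => ?_⟩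
  obtain ⟨⟨a, b, e⟩, rfl⟩ := hS.closure_subset_range_wreathWord
    (show g ∈ Subgroup.closure {x, y, z} by simp [hgen])
  dsimp only at hg ⊢
  have hκg : (κ (wreathWord x y z a b e) : Matrix (Fin 3) (Fin 3) ℂ) =
      diagonal ![α, α, α⁻¹ ^ 2] ^ (a : ℕ) * diagonal ![α, α⁻¹ ^ 2, α] ^ (b : ℕ) *
        swapMatrix ℂ ^ (e : ℕ) := by
    simp [wreathWord, hκx, hκy, hκz, hX, hY, hZ]
  have hsq : wreathWord x y z a b e ^ 2 = 1 := by
    simpa [hg] using pow_orderOf_eq_one (wreathWord x y z a b e)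
  have hne : wreathWord x y z a b e ≠ 1 := fun h1 => by simp [h1] at hg
  rcases hS.involution_cases hgen hcardN e.isLt hsq hne with ⟨he, h2a, h2b, hab⟩ | ⟨he, hab⟩
  · rw [hκg, he, pow_zero, mul_one]
    exact trace_diagonal_pow_mul_diagonal_pow_eq_neg_one hα h2a h2b hab
  · rw [hκg, he, pow_one]
    exact trace_diagonal_pow_mul_diagonal_pow_mul_swapMatrix_eq_neg_one hα.pow_eq_one hab

theorem stmt_12 {S : Type} [Group S] [Fintype S] (n : ℕ) (hn : 2 ≤ n)
    -- `S` is the wreathed 2-group of order `2^(2n+1)`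
    (hcard : Nat.card S = 2 ^ (2 * n + 1))
    (x y z : S) (hgen : Subgroup.closure {x, y, z} = ⊤)
    (hx : x ^ 2 ^ n = 1) (hy : y ^ 2 ^ n = 1) (hz : z ^ 2 = 1)
    (hcomm : x * y = y * x) (hconj : z * x * z⁻¹ = y)
    -- `α` is a primitive `2^n`-th root of unity
    (α : ℂ) (hα : IsPrimitiveRoot α (2 ^ n)) :
    -- `κ` is a well-defined homomorphism `S → GL₃(ℂ)` with the prescribed values
    ∃ κ : S →* GL (Fin 3) ℂ,
      (κ x : Matrix (Fin 3) (Fin 3) ℂ) = Matrix.diagonal ![α, α, α⁻¹ ^ 2] ∧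
      (κ y : Matrix (Fin 3) (Fin 3) ℂ) = Matrix.diagonal ![α, α⁻¹ ^ 2, α] ∧
      (κ z : Matrix (Fin 3) (Fin 3) ℂ) = !![-1, 0, 0; 0, 0, 1; 0, 1, 0] ∧
      -- the character `ν = tr ∘ κ` takes the value `-1` on every involution
      ∀ g : S, orderOf g = 2 → Matrix.trace (κ g : Matrix (Fin 3) (Fin 3) ℂ) = -1 :=
  stmt_12_general n hcard x y z hgen hx hz hcomm hconj α hα
end

section
/- Let G be a finite group, p a prime dividing |G|, and G_p a Sylow p-subgroup of G. If G_p is abelian, or G_p is normal in G, or G is p-nilpotent, then Ω₁(Z(G_p)) is strongly closed in G_p with respect to G. -/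
theorem stmt_14 {p : ℕ} [Fact p.Prime] {G : Type*} [Group G] [Finite G]
    (hdvd : p ∣ Nat.card G) (Gp : Sylow p G)
    -- `G_p` is abelian, or `G_p ⊴ G`, or `G` is `p`-nilpotent
    (h : (∀ a b : Gp, a * b = b * a) ∨ (Gp : Subgroup G).Normal ∨
      (∃ N : Subgroup G, N.Normal ∧ (Nat.card N).Coprime p ∧
        N ⊔ (Gp : Subgroup G) = ⊤)) :
    IsStronglyClosed
      (Subgroup.map (Gp : Subgroup G).subtype (Omega1 p (Subgroup.center Gp)))
      (Gp : Subgroup G) := by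
  have hOle : Omega1 p (Subgroup.center (Gp : Subgroup G)) ≤ Subgroup.center Gp :=
    (Subgroup.closure_le _).2 (fun x hx => hx.1)
  intro g x hx hgx
  obtain ⟨y, hy, rfl⟩ := hx
  rcases h with habel | hnorm | ⟨N, hN, hcop, hsup⟩
  · -- abelian case
    -- p-torsion subgroup of Gp
    let T : Subgroup (Gp : Subgroup G) :=
      { carrier := {z | z ^ p = 1}
        one_mem' := one_pow p
        mul_mem' := by
          intro a b ha hb
          have : (a * b) ^ p = a ^ p * b ^ p := Commute.mul_pow (habel a b) p
          simp [Set.mem_setOf_eq] at ha hb ⊢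
          simp [this, ha, hb]
        inv_mem' := by
          intro a ha
          simp [Set.mem_setOf_eq] at ha ⊢
          simp [← inv_pow, ha] }
    have hyT : y ^ p = 1 :=
      (Subgroup.closure_le T).2 (fun z hz => hz.2) hy
    have hyp : ((y : G)) ^ p = 1 := by
      have := congrArg (Subgroup.subtype (Gp : Subgroup G)) hyT
      simpa using this
    refine ⟨⟨g * (y : G) * g⁻¹, hgx⟩, Subgroup.subset_closure ⟨?_, ?_⟩, rfl⟩
    · exact Subgroup.mem_center_iff.2 fun b => habel _ _
    · ext
      push_cast
      rw [conj_pow, hyp, mul_one, mul_inv_cancel]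
  · -- normal case
    haveI := hnorm
    let φ : MulAut (Gp : Subgroup G) := MulAut.conjNormal g
    have hmem : φ y ∈ Omega1 p (Subgroup.center (Gp : Subgroup G)) := by
      have : Subgroup.map φ.toMonoidHom (Omega1 p (Subgroup.center (Gp : Subgroup G))) ≤
          Omega1 p (Subgroup.center (Gp : Subgroup G)) := by
        rw [Omega1, MonoidHom.map_closure]
        apply Subgroup.closure_mono
        rintro _ ⟨z, ⟨hz1, hz2⟩, rfl⟩
        refine ⟨Subgroup.mem_center_iff.2 fun b => ?_, by rw [← map_pow, hz2, map_one]⟩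
        have : φ (z * φ.symm b) = φ (φ.symm b * z) := by
          rw [Subgroup.mem_center_iff.1 hz1]
        simpa using this.symm
      exact this ⟨y, hy, rfl⟩
    exact ⟨φ y, hmem, by simp [φ, MulAut.conjNormal_apply]⟩
  · -- p-nilpotent case
    have hg : g ∈ (↑(N ⊔ (Gp : Subgroup G)) : Set G) := by
      rw [hsup]; trivial
    rw [Subgroup.normal_mul] at hg
    obtain ⟨n, hn, s, hs, rfl⟩ := hg
    have hyc : y ∈ Subgroup.center (Gp : Subgroup G) := hOle hy
    have hsy : s * (y : G) * s⁻¹ = y := by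
      have := (Subgroup.mem_center_iff.1 hyc ⟨s, hs⟩)
      have h2 : s * (y : G) = (y : G) * s := by
        exact_mod_cast congrArg (Subgroup.subtype (Gp : Subgroup G)) this
      rw [h2]; group
    have hconj : (n * s) * (y : G) * (n * s)⁻¹ = n * (y : G) * n⁻¹ := by
      rw [mul_inv_rev, show n * s * (y : G) * (s⁻¹ * n⁻¹) = n * (s * (y : G) * s⁻¹) * n⁻¹ by group, hsy]
    change n * s * (y : G) * (n * s)⁻¹ ∈ _ at hgx ⊢
    rw [hconj] at hgx ⊢
    -- commutator in N ∩ Gp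
    have hcN : n * (y : G) * n⁻¹ * (y : G)⁻¹ ∈ N := by
      have : (y : G) * n⁻¹ * (y : G)⁻¹ ∈ N := hN.conj_mem _ (inv_mem hn) _
      have := mul_mem hn this
      simpa [mul_assoc] using this
    have hcG : n * (y : G) * n⁻¹ * (y : G)⁻¹ ∈ (Gp : Subgroup G) :=
      mul_mem hgx (inv_mem y.2)
    have hc1 : n * (y : G) * n⁻¹ * (y : G)⁻¹ = 1 := by
      set c := n * (y : G) * n⁻¹ * (y : G)⁻¹ with hc
      have d1 : orderOf c ∣ Nat.card N := Subgroup.orderOf_dvd_natCard _ hcN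
      have d2 : orderOf c ∣ Nat.card (Gp : Subgroup G) :=
        Subgroup.orderOf_dvd_natCard _ hcG
      rw [Sylow.card_eq_multiplicity] at d2
      have hcop2 : (orderOf c).Coprime (p ^ (Nat.card G).factorization p) :=
        (Nat.Coprime.coprime_dvd_left d1 hcop).pow_right _
      exact orderOf_eq_one_iff.1 (Nat.Coprime.eq_one_of_dvd hcop2 d2)
    have : n * (y : G) * n⁻¹ = y := by
      have := congrArg (· * (y : G)) hc1
      simpa [mul_assoc] using this
    rw [this]
    exact ⟨y, hy, rfl⟩
end

section
/- Let p be an odd prime and let P be an extraspecial p-group of order p³ and exponent p. If χ is a character of P such that (a) [χ|_E, 1_E] = 0 for every rank-2 elementary abelian subgroup E ⊆ P, and (b) χ(x) = χ(y) for some x ∈ Z(P) \ {1} and some y ∈ P \ Z(P), then χ = 0. In particular no nonzero character of P can both respect a fusion pattern identifying a central element of order p with a noncentral one and vanish against the trivial character on every rank-2 elementary abelian subgroup. -/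
open scoped Classical

open Module

section Helpers

lemma lemA {G : Type} [Group G] [Fintype G] (V : FDRep ℂ G) (μ : G →* ℂˣ) :
    ∃ n : ℕ, ∑ g : G, ((μ g : ℂ))⁻¹ * V.character g = (n : ℂ) * (Nat.card G : ℂ) := by
  rw [Nat.card_eq_fintype_card]
  have hcard : (Fintype.card G : ℂ) ≠ 0 := by
    exact_mod_cast Fintype.card_ne_zero
  letI : Invertible (Fintype.card G : ℂ) := invertibleOfNonzero hcard
  let ρ' : Representation ℂ G V :=
    { toFun := fun g => ((μ g : ℂ))⁻¹ • V.ρ g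
      map_one' := by simp
      map_mul' := by
        intro a b
        simp only [map_mul, mul_inv, Units.val_mul]
        exact (smul_mul_smul_comm _ _ _ _).symm }
  have h := FDRep.average_char_eq_finrank_invariants (FDRep.of ρ')
  refine ⟨finrank ℂ (Representation.invariants (FDRep.of ρ').ρ), ?_⟩
  have hchar : ∀ g : G, (FDRep.of ρ').character g = ((μ g : ℂ))⁻¹ * V.character g := by
    intro g
    show LinearMap.trace ℂ _ (((μ g : ℂ))⁻¹ • V.ρ g) = _
    rw [LinearMap.map_smul, smul_eq_mul]
    rfl
  rw [Finset.sum_congr rfl (fun g _ => hchar g)] at h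
  have h2 := congrArg (fun z => (Fintype.card G : ℂ) * z) h
  simp only [smul_eq_mul, ← mul_assoc, Nat.card_eq_fintype_card, mul_inv_cancel₀ hcard, one_mul] at h2
  rw [h2, mul_comm]

lemma lemB {P : Type} [Group P] [Fintype P] (V : FDRep ℂ P) (H : Subgroup P) (μ : ↥H →* ℂˣ) :
    ∃ n : ℕ, ∑ h : ↥H, ((μ h : ℂ))⁻¹ * V.character ↑h = (n : ℂ) * (Nat.card ↥H : ℂ) := by
  obtain ⟨n, hn⟩ := lemA (FDRep.of (V.ρ.comp H.subtype)) μ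
  refine ⟨n, ?_⟩
  rw [← hn]
  exact Finset.sum_congr rfl (fun h _ => rfl)

lemma sum_subgroup_le {P : Type} [Group P] [Fintype P] {H K : Subgroup P} (hle : H ≤ K)
    (φ : P → ℂ) [dec : DecidablePred fun k : ↥K => (k : P) ∈ H] :
    ∑ k : ↥K, (if (k : P) ∈ H then φ ↑k else 0) = ∑ h : ↥H, φ ↑h := by
  rw [← Finset.sum_filter]
  refine Finset.sum_bij' (fun (k : ↥K) (hk : k ∈ Finset.univ.filter (fun k : ↥K => (k : P) ∈ H))
      => (⟨(k : P), (Finset.mem_filter.mp hk).2⟩ : ↥H))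
      (fun h _ => (⟨(h : P), hle h.2⟩ : ↥K)) ?_ ?_ ?_ ?_ ?_
  · intro a _; exact Finset.mem_univ _
  · intro b _; exact Finset.mem_filter.mpr ⟨Finset.mem_univ _, b.2⟩
  · intro a _; rfl
  · intro b _; rfl
  · intro a _; rfl

lemma sum_univ_fintype_congr {α : Type} {F1 F2 : Fintype α} (f : α → ℂ) :
    @Finset.sum α ℂ _ (@Finset.univ α F1) f = @Finset.sum α ℂ _ (@Finset.univ α F2) f := by
  rw [Subsingleton.elim F1 F2]

end Helpers

section Roots
variable {p : ℕ} [hfp : Fact p.Prime] {ζ : ℂ} (hζ : IsPrimitiveRoot ζ p)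
include hζ

omit hfp in
lemma pow_mod_p (m : ℕ) : ζ ^ (m % p) = ζ ^ m := by
  conv_rhs => rw [← Nat.div_add_mod m p, pow_add, pow_mul, hζ.pow_eq_one, one_pow, one_mul]

lemma pow_val_add (a b : ZMod p) : ζ ^ (a + b).val = ζ ^ a.val * ζ ^ b.val := by
  haveI : NeZero p := ⟨hfp.out.ne_zero⟩
  rw [ZMod.val_add, pow_mod_p hζ, pow_add]

lemma pow_val_inv (a : ZMod p) : (ζ ^ a.val)⁻¹ = ζ ^ (-a).val := by
  refine inv_eq_of_mul_eq_one_right ?_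
  rw [← pow_val_add hζ, add_neg_cancel, ZMod.val_zero, pow_zero]

lemma sum_zmod_pow_val : ∑ u : ZMod p, ζ ^ u.val = 0 := by
  haveI : NeZero p := ⟨hfp.out.ne_zero⟩
  have hb : ∑ u : ZMod p, ζ ^ u.val = ∑ i ∈ Finset.range p, ζ ^ i := by
    refine Finset.sum_bij' (fun (u : ZMod p) (_ : u ∈ Finset.univ) => u.val)
      (fun i _ => ((i : ZMod p))) ?_ ?_ ?_ ?_ ?_
    · intro a _; exact Finset.mem_range.mpr (ZMod.val_lt a)
    · intro i _; exact Finset.mem_univ _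
    · intro a _; exact ZMod.natCast_rightInverse a
    · intro i hi; exact ZMod.val_cast_of_lt (Finset.mem_range.mp hi)
    · intro a _; rfl
  rw [hb]
  exact hζ.geom_sum_eq_zero hfp.out.one_lt

lemma sum_ortho (t : ZMod p) :
    ∑ m : ZMod p, ζ ^ (m * t).val = if t = 0 then (p : ℂ) else 0 := by
  haveI : NeZero p := ⟨hfp.out.ne_zero⟩
  split_ifs with ht
  · subst ht
    simp only [mul_zero, ZMod.val_zero, pow_zero]
    rw [Finset.sum_const, Finset.card_univ, ZMod.card]
    simp
  · have hbij : Function.Bijective (fun m : ZMod p => m * t) := (Equiv.mulRight₀ t ht).bijective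
    rw [Fintype.sum_bijective _ hbij _ (fun u => ζ ^ u.val) (fun m => rfl)]
    exact sum_zmod_pow_val hζ

open Polynomial in
lemma cyclo_coeffs_zero (c : ℕ → ℕ) (hc0 : c 0 = 0)
    (hsum : ∑ k ∈ Finset.range p, (c k : ℂ) * ζ ^ k = 0) :
    ∀ k, k < p → c k = 0 := by
  have hp : p.Prime := hfp.out
  have hζ0 : ζ ≠ 0 := by
    intro h
    have := hζ.pow_eq_one
    rw [h, zero_pow hp.ne_zero] at this
    exact zero_ne_one this
  set g : ℚ[X] := ∑ k ∈ Finset.range (p - 1), C ((c (k + 1) : ℚ)) * X ^ k with hg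
  have haev : Polynomial.aeval ζ g = ∑ k ∈ Finset.range (p - 1), (c (k + 1) : ℂ) * ζ ^ k := by
    rw [hg, map_sum]
    refine Finset.sum_congr rfl fun k _ => ?_
    simp [Polynomial.aeval_C]
  have hzero : Polynomial.aeval ζ g = 0 := by
    have hmul : ζ * Polynomial.aeval ζ g = 0 := by
      rw [haev, Finset.mul_sum]
      have : ∀ k ∈ Finset.range (p - 1),
          ζ * ((c (k + 1) : ℂ) * ζ ^ k) = (c (k + 1) : ℂ) * ζ ^ (k + 1) := by
        intro k _; ring
      rw [Finset.sum_congr rfl this]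
      have h2p := hp.two_le
      have hps : p = (p - 1) + 1 := by omega
      have := Finset.sum_range_succ' (fun k => (c k : ℂ) * ζ ^ k) (p - 1)
      rw [← hps] at this
      rw [← sub_eq_zero]
      rw [hsum] at this
      simp [hc0] at this
      simpa using this.symm
    rcases mul_eq_zero.mp hmul with h | h
    · exact absurd h hζ0
    · exact h
  have hdvd : minpoly ℚ ζ ∣ g := minpoly.dvd ℚ ζ hzero
  have hdeg : (minpoly ℚ ζ).natDegree = p - 1 := by
    rw [← cyclotomic_eq_minpoly_rat hζ hp.pos, natDegree_cyclotomic, Nat.totient_prime hp]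
  have hgdeg : g.natDegree ≤ p - 2 := by
    refine Polynomial.natDegree_sum_le_of_forall_le _ _ fun k hk => ?_
    refine le_trans (Polynomial.natDegree_C_mul_X_pow_le _ _) ?_
    have := Finset.mem_range.mp hk
    omega
  have hgz : g = 0 := by
    refine Polynomial.eq_zero_of_dvd_of_natDegree_lt hdvd ?_
    rw [hdeg]
    have h2 := hp.two_le
    omega
  have hcoeff : ∀ k, k < p - 1 → (c (k + 1) : ℚ) = 0 := by
    intro k hk
    have : g.coeff k = (c (k + 1) : ℚ) := by
      rw [hg, Polynomial.finset_sum_coeff]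
      rw [Finset.sum_congr rfl (fun j _ => by
        rw [Polynomial.coeff_C_mul, Polynomial.coeff_X_pow, mul_ite, mul_one, mul_zero])]
      rw [Finset.sum_ite_eq (Finset.range (p - 1)) k (fun j => (c (j + 1) : ℚ))]
      simp [hk]
    rw [hgz] at this
    simpa using this.symm
  intro k hk
  rcases Nat.eq_zero_or_pos k with rfl | hkpos
  · exact hc0
  · have : (c ((k - 1) + 1) : ℚ) = 0 := hcoeff (k - 1) (by omega)
    rw [show k - 1 + 1 = k by omega] at this
    exact_mod_cast this

end Roots

section Omega
variable {p : ℕ} [hfp : Fact p.Prime] {Z : Type} [Group Z]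

lemma exists_dlog (hZ : Nat.card Z = p) : ∃ d : Z → ZMod p,
    d 1 = 0 ∧ (∀ a b, d (a * b) = d a + d b) ∧ Function.Injective d := by
  haveI : IsCyclic Z := isCyclic_of_prime_card hZ
  have e := zmodCyclicMulEquiv (inferInstance : IsCyclic Z)
  rw [hZ] at e
  refine ⟨fun z => Multiplicative.toAdd (e.symm z), ?_, ?_, ?_⟩
  · simp
  · intro a b; simp [map_mul]
  · intro a b hab
    have := Multiplicative.toAdd.injective hab
    exact e.symm.injective this

lemma exists_omega {ζ : ℂ} (hζ : IsPrimitiveRoot ζ p) (d : Z → ZMod p)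
    (hd1 : d 1 = 0) (hdm : ∀ a b, d (a * b) = d a + d b) (m : ZMod p) :
    ∃ ω : Z →* ℂˣ, ∀ z, ((ω z : ℂ)) = ζ ^ (m * d z).val := by
  have hζu := (hζ.isUnit hfp.out.ne_zero)
  refine ⟨{ toFun := fun z => hζu.unit ^ (m * d z).val
            map_one' := by simp [hd1]
            map_mul' := ?_ }, ?_⟩
  · intro a b
    apply Units.ext
    push_cast [hζu.unit_spec]
    rw [hdm a b, mul_add, pow_val_add hζ]
  · intro z
    push_cast [hζu.unit_spec]
    rfl
end Omega

section GroupAux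
variable {p : ℕ} [Fact p.Prime] {P : Type} [Group P] [Fintype P]

omit [Fintype P] in
lemma aux_comm_center (hcard : Nat.card P = p ^ 3) (hZ : Nat.card (Subgroup.center P) = p)
    (a b : P) : a * b * a⁻¹ * b⁻¹ ∈ Subgroup.center P := by
  have hp : p.Prime := Fact.out
  have hq : Nat.card (P ⧸ Subgroup.center P) = p ^ 2 := by
    have h := Subgroup.card_eq_card_quotient_mul_card_subgroup (Subgroup.center P)
    rw [hcard, hZ] at h
    have : p ^ 2 * p = Nat.card (P ⧸ Subgroup.center P) * p := by rw [← h]; ring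
    exact (Nat.eq_of_mul_eq_mul_right hp.pos this).symm
  have hcomm := IsPGroup.commutative_of_card_eq_prime_sq hq
  have hπ : QuotientGroup.mk' (Subgroup.center P) (a * b * a⁻¹ * b⁻¹) = 1 := by
    simp only [map_mul, map_inv]
    rw [hcomm (QuotientGroup.mk' (Subgroup.center P) a) (QuotientGroup.mk' (Subgroup.center P) b)]
    group
  rwa [← QuotientGroup.ker_mk' (Subgroup.center P), MonoidHom.mem_ker]

omit [Fintype P] in
/-- commutator-with-`c` homomorphism into the center -/
def commHom (hcard : Nat.card P = p ^ 3) (hZ : Nat.card (Subgroup.center P) = p)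
    (c : P) : P →* ↥(Subgroup.center P) where
  toFun g := ⟨c * g * c⁻¹ * g⁻¹, aux_comm_center hcard hZ c g⟩
  map_one' := by ext; simp
  map_mul' g h := by
    ext
    show c * (g * h) * c⁻¹ * (g * h)⁻¹ = (c * g * c⁻¹ * g⁻¹) * (c * h * c⁻¹ * h⁻¹)
    have hw := (Subgroup.mem_center_iff.mp (aux_comm_center hcard hZ c h)) g⁻¹
    calc c * (g * h) * c⁻¹ * (g * h)⁻¹
        = c * g * c⁻¹ * ((c * h * c⁻¹ * h⁻¹) * g⁻¹) := by group
    _ = c * g * c⁻¹ * (g⁻¹ * (c * h * c⁻¹ * h⁻¹)) := by rw [← hw]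
    _ = (c * g * c⁻¹ * g⁻¹) * (c * h * c⁻¹ * h⁻¹) := by group

omit [Fintype P] in
lemma commHom_apply (hcard : Nat.card P = p ^ 3) (hZ : Nat.card (Subgroup.center P) = p)
    (c g : P) : (commHom hcard hZ c g : P) = c * g * c⁻¹ * g⁻¹ := rfl

lemma aux_cent_card (hcard : Nat.card P = p ^ 3) (hZ : Nat.card (Subgroup.center P) = p)
    {y : P} (hy : y ∉ Subgroup.center P) :
    Nat.card (Subgroup.centralizer ({y} : Set P)) = p ^ 2 := by
  have hp : p.Prime := Fact.out
  set C := Subgroup.centralizer ({y} : Set P) with hC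
  have hZle : Subgroup.center P ≤ C := Subgroup.center_le_centralizer {y}
  have hyC : y ∈ C := Subgroup.mem_centralizer_iff.mpr (by simp)
  have hdvd : Nat.card C ∣ p ^ 3 := hcard ▸ Subgroup.card_subgroup_dvd_card C
  obtain ⟨k, hk3, hkC⟩ := (Nat.dvd_prime_pow hp).mp hdvd
  have hne_top : C ≠ ⊤ := by
    intro h
    exact hy (Subgroup.mem_center_iff.mpr (fun g => by
      have hg : g ∈ C := h ▸ Subgroup.mem_top g
      exact (Subgroup.mem_centralizer_iff.mp hg y rfl).symm))
  have hlt : p < Nat.card C := by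
    rcases lt_or_ge p (Nat.card C) with h | h
    · exact h
    · exfalso
      have : Subgroup.center P = C := Subgroup.eq_of_le_of_card_ge hZle (hZ ▸ h)
      exact hy (this ▸ hyC)
  have h2p := hp.two_le
  have hk2 : 2 ≤ k := by
    by_contra h
    push_neg at h
    interval_cases k
    · rw [hkC, pow_zero] at hlt; omega
    · rw [hkC, pow_one] at hlt; omega
  have hk_ne3 : k ≠ 3 := by
    intro h
    subst h
    exact hne_top (Subgroup.eq_top_of_card_eq C (by rw [hkC, hcard]))
  have : k = 2 := by omega
  rw [hkC, this]

lemma char_mul_central (hcard : Nat.card P = p ^ 3) (hZ : Nat.card (Subgroup.center P) = p)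
    (V : FDRep ℂ P) {y z : P} (hy : y ∉ Subgroup.center P) (hz : z ∈ Subgroup.center P) :
    V.character (y * z) = V.character y := by
  have hp : p.Prime := Fact.out
  set f := commHom hcard hZ y with hf
  have hker : MonoidHom.ker f = Subgroup.centralizer ({y} : Set P) := by
    ext g
    rw [MonoidHom.mem_ker]
    constructor
    · intro h
      have h1 : y * g * y⁻¹ * g⁻¹ = 1 := congrArg Subtype.val h
      rw [Subgroup.mem_centralizer_iff]
      intro h' hh'
      rw [Set.mem_singleton_iff] at hh'
      subst hh'
      calc h' * g = (h' * g * h'⁻¹ * g⁻¹) * (g * h') := by group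
      _ = g * h' := by rw [h1]; group
    · intro h
      have h1 : y * g = g * y := Subgroup.mem_centralizer_iff.mp h y rfl
      apply Subtype.ext
      show y * g * y⁻¹ * g⁻¹ = 1
      rw [h1]
      group
  have hkcard : Nat.card (MonoidHom.ker f) = p ^ 2 := by
    rw [hker]; exact aux_cent_card hcard hZ hy
  have hqcard : Nat.card (P ⧸ MonoidHom.ker f) = p := by
    have h := Subgroup.card_eq_card_quotient_mul_card_subgroup (MonoidHom.ker f)
    rw [hcard, hkcard] at h
    have h2 : p * p ^ 2 = Nat.card (P ⧸ MonoidHom.ker f) * p ^ 2 := by rw [← h]; ring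
    exact (Nat.eq_of_mul_eq_mul_right (pow_pos hp.pos 2) h2).symm
  have hrange : Nat.card (MonoidHom.range f) = p := by
    rw [← Nat.card_congr (QuotientGroup.quotientKerEquivRange f).toEquiv]
    exact hqcard
  have htop : MonoidHom.range f = ⊤ := by
    apply Subgroup.eq_top_of_card_eq
    rw [hrange, hZ]
  have hmem : (⟨z⁻¹, inv_mem hz⟩ : ↥(Subgroup.center P)) ∈ MonoidHom.range f := by
    rw [htop]; exact Subgroup.mem_top _
  obtain ⟨g, hg⟩ := hmem
  have hval : y * g * y⁻¹ * g⁻¹ = z⁻¹ := congrArg Subtype.val hg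
  have h1 : g * y * g⁻¹ * y⁻¹ = z := by
    rw [← inv_inv z, ← hval]; group
  have hcj : g * y * g⁻¹ = y * z := by
    calc g * y * g⁻¹ = (g * y * g⁻¹ * y⁻¹) * y := by group
    _ = z * y := by rw [h1]
    _ = y * z := (Subgroup.mem_center_iff.mp hz y).symm
  rw [← hcj]
  exact FDRep.char_conj V y g

end GroupAux
section SZero
variable {p : ℕ} [Fact p.Prime] {P : Type} [Group P] [Fintype P]

lemma S_eq_zero (hcard : Nat.card P = p ^ 3) (hZ : Nat.card (Subgroup.center P) = p)
    (V : FDRep ℂ P)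
    (hEC : ∀ y, y ∉ Subgroup.center P →
      ∑ e : ↥(Subgroup.centralizer ({y} : Set P)), V.character ↑e = 0) :
    ∑ z : ↥(Subgroup.center P), V.character ↑z = 0 := by
  classical
  have hp : p.Prime := Fact.out
  have hpC : (p : ℂ) ≠ 0 := Nat.cast_ne_zero.mpr hp.ne_zero
  obtain ⟨n₀, hn₀⟩ := lemA V 1
  simp only [MonoidHom.one_apply, Units.val_one, inv_one, one_mul] at hn₀
  obtain ⟨nZ, hnZ⟩ := lemB V (Subgroup.center P) 1
  simp only [MonoidHom.one_apply, Units.val_one, inv_one, one_mul] at hnZ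
  rw [hZ] at hnZ
  rw [hcard] at hn₀
  have hZsum : ∑ e ∈ Finset.univ.filter (fun g => g ∈ Subgroup.center P), V.character e
      = ∑ z : ↥(Subgroup.center P), V.character ↑z := Finset.sum_subtype _ (by simp) _
  have hnZ' : ∑ z : ↥(Subgroup.center P), V.character ↑z = (nZ : ℂ) * (p : ℂ) :=
    (sum_univ_fintype_congr _).trans hnZ
  have hAcard : (Finset.univ.filter (fun g => g ∈ Subgroup.center P)).card = p := by
    rw [← Fintype.card_subtype, ← Nat.card_eq_fintype_card]
    exact hZ
  have hNotcard : (Finset.univ.filter (fun g => g ∉ Subgroup.center P)).card = p ^ 3 - p := by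
    rw [Finset.filter_not, Finset.card_sdiff_of_subset (Finset.filter_subset _ _), hAcard,
      Finset.card_univ, ← Nat.card_eq_fintype_card, hcard]
  -- counting weights
  have hcount_cent : ∀ e : P, e ∈ Subgroup.center P →
      ((Finset.univ.filter (fun g => g ∉ Subgroup.center P)).filter
        (fun y => e ∈ Subgroup.centralizer ({y} : Set P))).card = p ^ 3 - p := by
    intro e he
    rw [Finset.filter_eq_self.mpr, hNotcard]
    intro y _
    rw [Subgroup.mem_centralizer_iff]
    intro h' hh'
    rw [Set.mem_singleton_iff] at hh'
    rw [hh']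
    exact Subgroup.mem_center_iff.mp he y
  have hcount_noncent : ∀ e : P, e ∉ Subgroup.center P →
      ((Finset.univ.filter (fun g => g ∉ Subgroup.center P)).filter
        (fun y => e ∈ Subgroup.centralizer ({y} : Set P))).card = p ^ 2 - p := by
    intro e he
    have hset : (Finset.univ.filter (fun g => g ∉ Subgroup.center P)).filter
        (fun y => e ∈ Subgroup.centralizer ({y} : Set P)) =
        (Finset.univ.filter (fun y => y ∈ Subgroup.centralizer ({e} : Set P))) \
        (Finset.univ.filter (fun g => g ∈ Subgroup.center P)) := by
      ext u
      simp only [Finset.mem_filter, Finset.mem_sdiff, Finset.mem_univ, true_and,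
        Finset.filter_filter]
      constructor
      · rintro ⟨hu1, hu2⟩
        refine ⟨?_, hu1⟩
        rw [Subgroup.mem_centralizer_iff]
        intro h' hh'
        rw [Set.mem_singleton_iff] at hh'
        rw [hh']
        exact (Subgroup.mem_centralizer_iff.mp hu2 u rfl).symm
      · rintro ⟨hu1, hu2⟩
        refine ⟨hu2, ?_⟩
        rw [Subgroup.mem_centralizer_iff]
        intro h' hh'
        rw [Set.mem_singleton_iff] at hh'
        rw [hh']
        exact (Subgroup.mem_centralizer_iff.mp hu1 e rfl).symm
    rw [hset, Finset.card_sdiff_of_subset, hAcard]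
    · congr 1
      rw [← Fintype.card_subtype, ← Nat.card_eq_fintype_card]
      exact aux_cent_card hcard hZ he
    · intro u hu
      simp only [Finset.mem_filter, Finset.mem_univ, true_and] at hu ⊢
      exact Subgroup.center_le_centralizer _ hu
  have hE1 : (0 : ℂ) = ((p ^ 3 - p : ℕ) : ℂ) * (∑ z : ↥(Subgroup.center P), V.character ↑z)
      + ((p ^ 2 - p : ℕ) : ℂ) *
        (∑ e ∈ Finset.univ.filter (fun g => g ∉ Subgroup.center P), V.character e) := by
    have h0 : (0 : ℂ) = ∑ y ∈ Finset.univ.filter (fun g => g ∉ Subgroup.center P),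
        ∑ e ∈ Finset.univ.filter (fun g => g ∈ Subgroup.centralizer ({y} : Set P)),
          V.character e := by
      symm
      apply Finset.sum_eq_zero
      intro y hy
      exact (Finset.sum_subtype _ (by simp) _).trans (hEC y (Finset.mem_filter.mp hy).2)
    rw [h0]
    calc ∑ y ∈ Finset.univ.filter (fun g => g ∉ Subgroup.center P),
        ∑ e ∈ Finset.univ.filter (fun g => g ∈ Subgroup.centralizer ({y} : Set P)), V.character e
        = ∑ y ∈ Finset.univ.filter (fun g => g ∉ Subgroup.center P),
          ∑ e : P, (if e ∈ Subgroup.centralizer ({y} : Set P) then V.character e else 0) := by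
          exact Finset.sum_congr rfl fun y _ => Finset.sum_filter _ _
    _ = ∑ e : P, ∑ y ∈ Finset.univ.filter (fun g => g ∉ Subgroup.center P),
          (if e ∈ Subgroup.centralizer ({y} : Set P) then V.character e else 0) :=
          Finset.sum_comm
    _ = ∑ e : P, (((Finset.univ.filter (fun g => g ∉ Subgroup.center P)).filter
          (fun y => e ∈ Subgroup.centralizer ({y} : Set P))).card : ℂ) * V.character e := by
          refine Finset.sum_congr rfl fun e _ => ?_
          rw [← Finset.sum_filter, Finset.sum_const, nsmul_eq_mul]
    _ = (∑ e ∈ Finset.univ.filter (fun g => g ∈ Subgroup.center P),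
          (((Finset.univ.filter (fun g => g ∉ Subgroup.center P)).filter
          (fun y => e ∈ Subgroup.centralizer ({y} : Set P))).card : ℂ) * V.character e)
        + ∑ e ∈ Finset.univ.filter (fun g => ¬ g ∈ Subgroup.center P),
          (((Finset.univ.filter (fun g => g ∉ Subgroup.center P)).filter
          (fun y => e ∈ Subgroup.centralizer ({y} : Set P))).card : ℂ) * V.character e :=
          (Finset.sum_filter_add_sum_filter_not _ _ _).symm
    _ = _ := by
          congr 1
          · rw [← hZsum, Finset.mul_sum]
            refine Finset.sum_congr rfl fun e he => ?_
            rw [hcount_cent e (Finset.mem_filter.mp he).2]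
          · rw [Finset.mul_sum]
            refine Finset.sum_congr rfl fun e he => ?_
            rw [hcount_noncent e (Finset.mem_filter.mp he).2]
  have hE2 : (∑ z : ↥(Subgroup.center P), V.character ↑z)
      + (∑ e ∈ Finset.univ.filter (fun g => g ∉ Subgroup.center P), V.character e)
      = (n₀ : ℂ) * ((p ^ 3 : ℕ) : ℂ) := by
    rw [← hZsum]
    rw [Finset.sum_filter_add_sum_filter_not]
    exact_mod_cast hn₀
  have hple3 : p ≤ p ^ 3 := Nat.le_self_pow (by norm_num) p
  have hple2 : p ≤ p ^ 2 := Nat.le_self_pow (by norm_num) p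
  have key : ((nZ * p ^ 4 + n₀ * p ^ 5 : ℕ) : ℂ) = ((nZ * p ^ 3 + n₀ * p ^ 4 : ℕ) : ℂ) := by
    push_cast [Nat.cast_sub hple3, Nat.cast_sub hple2] at hE1 hE2 hnZ' ⊢
    linear_combination (-(1:ℂ)) * hE1 - ((p:ℂ)^2 - (p:ℂ)) * hE2 - ((p:ℂ)^3 - (p:ℂ)^2) * hnZ'
  have keyN : nZ * p ^ 4 + n₀ * p ^ 5 = nZ * p ^ 3 + n₀ * p ^ 4 := Nat.cast_inj.mp key
  have hu : nZ * p ^ 3 * p + n₀ * p ^ 4 * p = nZ * p ^ 3 + n₀ * p ^ 4 := by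
    calc nZ * p ^ 3 * p + n₀ * p ^ 4 * p = nZ * p ^ 4 + n₀ * p ^ 5 := by ring
    _ = _ := keyN
  have h2 : 2 * (nZ * p ^ 3 + n₀ * p ^ 4) ≤ (nZ * p ^ 3 + n₀ * p ^ 4) * p := by
    rw [mul_comm (nZ * p ^ 3 + n₀ * p ^ 4) p]
    exact Nat.mul_le_mul_right _ hp.two_le
  have h3 : (nZ * p ^ 3 + n₀ * p ^ 4) * p = nZ * p ^ 3 + n₀ * p ^ 4 := by
    calc (nZ * p ^ 3 + n₀ * p ^ 4) * p = nZ * p ^ 3 * p + n₀ * p ^ 4 * p := by ring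
    _ = _ := hu
  rw [h3] at h2
  have hX : nZ * p ^ 3 + n₀ * p ^ 4 = 0 := by omega
  have h4 : nZ * p ^ 3 = 0 := (Nat.add_eq_zero.mp hX).1
  have hp3 : p ^ 3 ≠ 0 := pow_ne_zero _ hp.ne_zero
  have hnZ0 : nZ = 0 := by
    rcases Nat.mul_eq_zero.mp h4 with h | h
    · exact h
    · exact absurd h hp3
  rw [hnZ', hnZ0]
  simp
end SZero
section Van
variable {p : ℕ} [hfp : Fact p.Prime] {P : Type} [Group P] [Fintype P]

lemma noncentral_vanish (hcard : Nat.card P = p ^ 3) (hZ : Nat.card (Subgroup.center P) = p)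
    (V : FDRep ℂ P) {ζ : ℂ} (hζ : IsPrimitiveRoot ζ p)
    (d : ↥(Subgroup.center P) → ZMod p) (hd1 : d 1 = 0)
    (hdinj : Function.Injective d)
    (ω : ZMod p → (↥(Subgroup.center P) →* ℂˣ))
    (hω : ∀ m z, ((ω m z : ℂ)) = ζ ^ (m * d z).val)
    (hS0 : ∑ z : ↥(Subgroup.center P), V.character ↑z = 0)
    {y : P} (hy : y ∉ Subgroup.center P)
    (hcj : ∀ z : P, z ∈ Subgroup.center P → V.character (y * z) = V.character y) :
    V.character y = 0 := by
  classical
  have hp : p.Prime := hfp.out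
  have hpC : (p : ℂ) ≠ 0 := Nat.cast_ne_zero.mpr hp.ne_zero
  set E := Subgroup.centralizer ({y} : Set P) with hEdef
  have cardE : Nat.card ↥E = p ^ 2 := aux_cent_card hcard hZ hy
  have hEcomm : ∀ a b : ↥E, a * b = b * a := IsPGroup.commutative_of_card_eq_prime_sq cardE
  have hZleE : Subgroup.center P ≤ E := Subgroup.center_le_centralizer _
  have hyE : y ∈ E := Subgroup.mem_centralizer_iff.mpr (by simp)
  obtain ⟨c, hc⟩ : ∃ c, c ∉ E := by
    by_contra h
    push_neg at h
    have htop : E = ⊤ := (Subgroup.eq_top_iff' E).mpr h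
    have h23 : p ^ 2 < p ^ 3 := Nat.pow_lt_pow_right hp.one_lt (by omega)
    rw [htop, Subgroup.card_top, hcard] at cardE
    omega
  set f : ↥E →* ↥(Subgroup.center P) := (commHom hcard hZ c).comp E.subtype with hfdef
  have hfval : ∀ e : ↥E, ((f e : P)) = c * ↑e * c⁻¹ * (↑e)⁻¹ := fun e => rfl
  have hker : ∀ e : ↥E, (f e = 1 ↔ (e : P) ∈ Subgroup.center P) := by
    intro e
    constructor
    · intro h
      by_contra hez
      have h1 : c * ↑e * c⁻¹ * (↑e)⁻¹ = 1 := by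
        rw [← hfval e, h]; rfl
      have hcomm_ce : c * ↑e = ↑e * c := by
        calc c * (e : P) = (c * ↑e * c⁻¹ * (↑e)⁻¹) * (↑e * c) := by group
        _ = ↑e * c := by rw [h1]; group
      have cardCe : Nat.card ↥(Subgroup.centralizer ({(e : P)} : Set P)) = p ^ 2 :=
        aux_cent_card hcard hZ hez
      have hEleCe : E ≤ Subgroup.centralizer ({(e : P)} : Set P) := by
        intro u hu
        rw [Subgroup.mem_centralizer_iff]
        intro h' hh'
        rw [Set.mem_singleton_iff] at hh'
        rw [hh']
        exact congrArg Subtype.val (hEcomm e ⟨u, hu⟩)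
      have hEeq : E = Subgroup.centralizer ({(e : P)} : Set P) :=
        Subgroup.eq_of_le_of_card_ge hEleCe (by rw [cardE, cardCe])
      apply hc
      rw [hEeq]
      rw [Subgroup.mem_centralizer_iff]
      intro h' hh'
      rw [Set.mem_singleton_iff] at hh'
      rw [hh']
      exact hcomm_ce.symm
    · intro h
      apply Subtype.ext
      show c * ↑e * c⁻¹ * (↑e)⁻¹ = 1
      rw [Subgroup.mem_center_iff.mp h c]
      group
  choose n hn using fun m : ZMod p => lemB V E ((ω m).comp f)
  have hA : ∀ m : ZMod p,
      ∑ e : ↥E, ζ ^ ((-m) * d (f e)).val * V.character ↑e = (n m : ℂ) * ((p : ℂ) ^ 2) := by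
    intro m
    have h1 := hn m
    rw [cardE] at h1
    push_cast at h1
    rw [← h1]
    refine Finset.sum_congr rfl fun e _ => ?_
    congr 1
    rw [MonoidHom.comp_apply (ω m) f e, hω m (f e), pow_val_inv hζ, neg_mul]
  have hsumA : ∑ m : ZMod p, (n m : ℂ) * ((p : ℂ) ^ 2)
      = (p : ℂ) * ∑ z : ↥(Subgroup.center P), V.character ↑z := by
    rw [← Finset.sum_congr rfl (fun m (_ : m ∈ Finset.univ) => hA m)]
    rw [Finset.sum_comm]
    have hinner : ∀ e : ↥E, ∑ m : ZMod p, ζ ^ ((-m) * d (f e)).val * V.character ↑e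
        = (p : ℂ) * (if (e : P) ∈ Subgroup.center P then V.character ↑e else 0) := by
      intro e
      rw [← Finset.sum_mul]
      have hneg : ∑ m : ZMod p, ζ ^ ((-m) * d (f e)).val
          = ∑ m : ZMod p, ζ ^ ((m * d (f e)).val) :=
        Fintype.sum_bijective (fun m : ZMod p => -m) neg_involutive.bijective _ _ (fun m => rfl)
      rw [hneg, sum_ortho hζ (d (f e))]
      have hcond : (d (f e) = 0) = ((e : P) ∈ Subgroup.center P) := by
        apply propext
        constructor
        · intro h0
          exact (hker e).mp (hdinj (by rw [h0, hd1]))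
        · intro hmem
          rw [(hker e).mpr hmem, hd1]
      simp only [hcond]
      split_ifs <;> ring
    rw [Finset.sum_congr rfl (fun e (_ : e ∈ Finset.univ) => hinner e)]
    rw [← Finset.mul_sum]
    congr 1
    exact (sum_subgroup_le hZleE V.character).trans (sum_univ_fintype_congr _)
  have hsum0 : ∑ m : ZMod p, (n m : ℂ) * ((p : ℂ) ^ 2) = 0 := by rw [hsumA, hS0, mul_zero]
  have hnm : ∀ m : ZMod p, n m = 0 := by
    have hnat : ((∑ m : ZMod p, n m : ℕ) : ℂ) * ((p : ℂ) ^ 2) = 0 := by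
      push_cast
      rw [Finset.sum_mul]
      exact hsum0
    have hs : (∑ m : ZMod p, n m) = 0 := by
      rcases mul_eq_zero.mp hnat with h | h
      · exact_mod_cast h
      · exact absurd h (pow_ne_zero _ hpC)
    intro m
    exact Finset.sum_eq_zero_iff.mp hs m (Finset.mem_univ m)
  have hA0 : ∀ m : ZMod p, ∑ e : ↥E, ζ ^ ((-m) * d (f e)).val * V.character ↑e = 0 := by
    intro m; rw [hA m, hnm m]; norm_num
  set yE : ↥E := ⟨y, hyE⟩ with hyEdef
  have h1 : ∑ m : ZMod p, ζ ^ ((m * d (f yE)).val) *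
      (∑ e : ↥E, ζ ^ ((-m) * d (f e)).val * V.character ↑e) = 0 := by
    rw [Finset.sum_congr rfl (fun m (_ : m ∈ Finset.univ) => by rw [hA0 m, mul_zero])]
    exact Finset.sum_const_zero
  have hswap : ∑ m : ZMod p, ζ ^ ((m * d (f yE)).val) *
        (∑ e : ↥E, ζ ^ ((-m) * d (f e)).val * V.character ↑e)
      = ∑ e : ↥E, (if f e = f yE then ((p : ℂ)) else 0) * V.character ↑e := by
    rw [Finset.sum_congr rfl
      (fun m (_ : m ∈ Finset.univ) => Finset.mul_sum Finset.univ _ (ζ ^ ((m * d (f yE)).val)))]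
    rw [Finset.sum_comm]
    refine Finset.sum_congr rfl fun e _ => ?_
    have hterm : ∀ m : ZMod p,
        ζ ^ ((m * d (f yE)).val) * (ζ ^ ((-m) * d (f e)).val * V.character ↑e)
        = ζ ^ ((m * (d (f yE) - d (f e))).val) * V.character ↑e := by
      intro m
      rw [← mul_assoc, ← pow_val_add hζ]
      congr 2
      ring
    rw [Finset.sum_congr rfl (fun m _ => hterm m), ← Finset.sum_mul, sum_ortho hζ]
    have hcnd : (d (f yE) - d (f e) = 0) = (f e = f yE) := by
      apply propext
      rw [sub_eq_zero]
      constructor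
      · intro h; exact hdinj h.symm
      · intro h; rw [h]
    simp only [hcnd]
  have hmemi : ∀ e : ↥E, f e = f yE → y⁻¹ * (e : P) ∈ Subgroup.center P := by
    intro e hfe
    have hh : f (yE⁻¹ * e) = 1 := by
      rw [map_mul, map_inv, hfe, inv_mul_cancel]
    have := (hker _).mp hh
    simpa [hyEdef] using this
  have hmemj : ∀ z : ↥(Subgroup.center P), y * (z : P) ∈ E :=
    fun z => E.mul_mem hyE (hZleE z.2)
  have hfiber : ∑ e : ↥E, (if f e = f yE then (V.character ↑e) else 0)
      = ∑ z : ↥(Subgroup.center P), V.character (y * ↑z) := by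
    rw [← Finset.sum_filter]
    refine Finset.sum_bij' (fun (e : ↥E) (he : e ∈ Finset.univ.filter (fun e : ↥E => f e = f yE))
        => (⟨y⁻¹ * ↑e, hmemi e (Finset.mem_filter.mp he).2⟩ : ↥(Subgroup.center P)))
        (fun z _ => (⟨y * ↑z, hmemj z⟩ : ↥E)) ?_ ?_ ?_ ?_ ?_
    · intro a _; exact Finset.mem_univ _
    · intro z _
      refine Finset.mem_filter.mpr ⟨Finset.mem_univ _, ?_⟩
      show f (⟨y * ↑z, hmemj z⟩ : ↥E) = f yE
      have hzz : (⟨y * ↑z, hmemj z⟩ : ↥E) = yE * ⟨↑z, hZleE z.2⟩ := by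
        apply Subtype.ext; rfl
      rw [hzz, map_mul, (hker ⟨↑z, hZleE z.2⟩).mpr z.2, mul_one]
    · intro a _; apply Subtype.ext; show y * (y⁻¹ * ↑a) = ↑a; group
    · intro z _; apply Subtype.ext; show y⁻¹ * (y * ↑z) = ↑z; group
    · intro a _; show V.character ↑a = V.character (y * (y⁻¹ * ↑a)); rw [mul_inv_cancel_left]
  have e2 : ∑ z : ↥(Subgroup.center P), V.character (y * ↑z) = (p : ℂ) * V.character y := by
    rw [Finset.sum_congr rfl (fun (z : ↥(Subgroup.center P)) (_ : z ∈ Finset.univ) => hcj ↑z z.2)]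
    rw [Finset.sum_const, nsmul_eq_mul]
    congr 1
    rw [Finset.card_univ, ← Nat.card_eq_fintype_card, hZ]
  have e1 : ∑ e : ↥E, (if f e = f yE then ((p : ℂ)) else 0) * V.character ↑e
      = (p : ℂ) * ∑ e : ↥E, (if f e = f yE then (V.character ↑e) else 0) := by
    rw [Finset.mul_sum]
    refine Finset.sum_congr rfl fun e _ => ?_
    split_ifs <;> ring
  have hfin : (p : ℂ) * ((p : ℂ) * V.character y) = 0 := by
    calc (p : ℂ) * ((p : ℂ) * V.character y)
        = (p : ℂ) * ∑ z : ↥(Subgroup.center P), V.character (y * ↑z) := by rw [e2]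
    _ = (p : ℂ) * ∑ e : ↥E, (if f e = f yE then (V.character ↑e) else 0) := by rw [hfiber]
    _ = ∑ e : ↥E, (if f e = f yE then ((p : ℂ)) else 0) * V.character ↑e := e1.symm
    _ = 0 := by rw [← hswap]; exact h1
  rcases mul_eq_zero.mp hfin with h | h
  · exact absurd h hpC
  rcases mul_eq_zero.mp h with h' | h'
  · exact absurd h' hpC
  · exact h'
end Van
section Cent
variable {p : ℕ} [hfp : Fact p.Prime] {P : Type} [Group P] [Fintype P]

lemma central_vanish (hZ : Nat.card (Subgroup.center P) = p)
    (V : FDRep ℂ P) {ζ : ℂ} (hζ : IsPrimitiveRoot ζ p)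
    (d : ↥(Subgroup.center P) → ZMod p) (hd1 : d 1 = 0)
    (hdinj : Function.Injective d)
    (ω : ZMod p → (↥(Subgroup.center P) →* ℂˣ))
    (hω : ∀ m z, ((ω m z : ℂ)) = ζ ^ (m * d z).val)
    (hS0 : ∑ z : ↥(Subgroup.center P), V.character ↑z = 0)
    {x : P} (hxZ : x ∈ Subgroup.center P) (hx1 : x ≠ 1)
    (hχx : V.character x = 0) :
    ∀ z ∈ Subgroup.center P, V.character z = 0 := by
  classical
  have hp : p.Prime := hfp.out
  haveI : NeZero p := ⟨hp.ne_zero⟩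
  have hpC : (p : ℂ) ≠ 0 := Nat.cast_ne_zero.mpr hp.ne_zero
  choose nB hB using fun m : ZMod p => lemB V (Subgroup.center P) (ω m)
  have hB' : ∀ m : ZMod p,
      ∑ z : ↥(Subgroup.center P), ζ ^ ((-m) * d z).val * V.character ↑z = (nB m : ℂ) * (p : ℂ) := by
    intro m
    have h1 := hB m
    rw [hZ] at h1
    have h1' : ∑ z : ↥(Subgroup.center P), ((ω m z : ℂ))⁻¹ * V.character ↑z
        = (nB m : ℂ) * (p : ℂ) := (sum_univ_fintype_congr _).trans h1
    rw [← h1']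
    refine Finset.sum_congr rfl fun z _ => ?_
    congr 1
    rw [hω m z, pow_val_inv hζ, neg_mul]
  -- inversion formula
  have hinv : ∀ w : ↥(Subgroup.center P),
      V.character ↑w = ∑ m : ZMod p, ζ ^ ((m * d w).val) * (nB m : ℂ) := by
    intro w
    have h1 : ∑ m : ZMod p, ζ ^ ((m * d w).val) *
        (∑ z : ↥(Subgroup.center P), ζ ^ ((-m) * d z).val * V.character ↑z)
        = ∑ m : ZMod p, ζ ^ ((m * d w).val) * ((nB m : ℂ) * (p : ℂ)) :=
      Finset.sum_congr rfl (fun m _ => by rw [hB' m])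
    have h2 : ∑ m : ZMod p, ζ ^ ((m * d w).val) *
        (∑ z : ↥(Subgroup.center P), ζ ^ ((-m) * d z).val * V.character ↑z)
        = (p : ℂ) * V.character ↑w := by
      rw [Finset.sum_congr rfl
        (fun m (_ : m ∈ Finset.univ) => Finset.mul_sum Finset.univ _ (ζ ^ ((m * d w).val)))]
      rw [Finset.sum_comm]
      have hterm : ∀ z : ↥(Subgroup.center P), ∀ m : ZMod p,
          ζ ^ ((m * d w).val) * (ζ ^ ((-m) * d z).val * V.character ↑z)
          = ζ ^ ((m * (d w - d z)).val) * V.character ↑z := by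
        intro z m
        rw [← mul_assoc, ← pow_val_add hζ]
        congr 2
        ring
      rw [Finset.sum_congr rfl (fun (z : ↥(Subgroup.center P)) (_ : z ∈ Finset.univ) =>
        Finset.sum_congr rfl (fun m _ => hterm z m))]
      rw [Finset.sum_congr rfl (fun (z : ↥(Subgroup.center P)) (_ : z ∈ Finset.univ) => by
        rw [← Finset.sum_mul, sum_ortho hζ (d w - d z)])]
      have hcnd : ∀ z : ↥(Subgroup.center P), (d w - d z = 0) = (z = w) := by
        intro z
        apply propext
        rw [sub_eq_zero]
        constructor
        · intro h; exact (hdinj h.symm)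
        · intro h; rw [h]
      rw [Finset.sum_congr rfl (fun (z : ↥(Subgroup.center P)) (_ : z ∈ Finset.univ) => by
        rw [show ((if d w - d z = 0 then (p:ℂ) else 0) * V.character ↑z)
            = (if z = w then (p:ℂ) * V.character ↑z else 0) from by
          simp only [hcnd z]; split_ifs <;> ring])]
      rw [Finset.sum_ite_eq' Finset.univ w (fun z : ↥(Subgroup.center P) => (p:ℂ) * V.character ↑z)]
      simp
    have h3 : (p : ℂ) * V.character ↑w
        = (∑ m : ZMod p, ζ ^ ((m * d w).val) * (nB m : ℂ)) * (p : ℂ) := by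
      rw [← h2, h1, Finset.sum_mul]
      refine Finset.sum_congr rfl fun m _ => ?_
      ring
    have h4 : (p : ℂ) * V.character ↑w
        = (p : ℂ) * ∑ m : ZMod p, ζ ^ ((m * d w).val) * (nB m : ℂ) := by
      rw [h3]; ring
    exact mul_left_cancel₀ hpC h4
  have hB00 : nB 0 = 0 := by
    have h1 := hB' 0
    have h2 : ∑ z : ↥(Subgroup.center P), ζ ^ ((-(0:ZMod p)) * d z).val * V.character ↑z
        = ∑ z : ↥(Subgroup.center P), V.character ↑z := by
      refine Finset.sum_congr rfl fun z _ => ?_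
      norm_num
    rw [h2, hS0] at h1
    have := (mul_eq_zero.mp h1.symm)
    rcases this with h | h
    · exact_mod_cast h
    · exact absurd h hpC
  have hdx0 : d ⟨x, hxZ⟩ ≠ 0 := by
    intro h
    apply hx1
    have := hdinj (h.trans hd1.symm)
    exact congrArg Subtype.val this
  set dx := d ⟨x, hxZ⟩ with hdxdef
  have hx0 : ∑ m : ZMod p, ζ ^ ((m * dx).val) * (nB m : ℂ) = 0 := by
    rw [← hinv ⟨x, hxZ⟩]
    exact hχx
  have hre : ∑ k ∈ Finset.range p, ((nB ((k : ZMod p) * dx⁻¹) : ℕ) : ℂ) * ζ ^ k = 0 := by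
    have hb1 : ∑ m : ZMod p, ζ ^ ((m * dx).val) * (nB m : ℂ)
        = ∑ u : ZMod p, ζ ^ (u.val) * (nB (u * dx⁻¹) : ℂ) := by
      refine Fintype.sum_bijective (fun m : ZMod p => m * dx)
        (Equiv.mulRight₀ dx hdx0).bijective _ _ (fun m => ?_)
      congr 2
      rw [mul_inv_cancel_right₀ hdx0]
    have hb2 : ∑ u : ZMod p, ζ ^ (u.val) * (nB (u * dx⁻¹) : ℂ)
        = ∑ k ∈ Finset.range p, ((nB ((k : ZMod p) * dx⁻¹) : ℕ) : ℂ) * ζ ^ k := by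
      refine Finset.sum_bij' (fun (u : ZMod p) (_ : u ∈ Finset.univ) => u.val)
        (fun i _ => ((i : ZMod p))) ?_ ?_ ?_ ?_ ?_
      · intro a _; exact Finset.mem_range.mpr (ZMod.val_lt a)
      · intro i _; exact Finset.mem_univ _
      · intro a _; exact ZMod.natCast_rightInverse a
      · intro i hi; exact ZMod.val_cast_of_lt (Finset.mem_range.mp hi)
      · intro a _
        rw [ZMod.natCast_rightInverse a, mul_comm]
    rw [← hb2, ← hb1, hx0]
  have hcc := cyclo_coeffs_zero hζ (fun k => nB ((k : ZMod p) * dx⁻¹)) (by simp [hB00]) hre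
  have hnB : ∀ m : ZMod p, nB m = 0 := by
    intro m
    have h1 : (((m * dx).val : ZMod p)) * dx⁻¹ = m := by
      rw [ZMod.natCast_rightInverse (m * dx), mul_inv_cancel_right₀ hdx0]
    have h2 := hcc (m * dx).val (ZMod.val_lt _)
    simpa [h1, mul_inv_cancel_right₀ hdx0] using h2
  intro z hz
  have := hinv ⟨z, hz⟩
  simpa [hnB] using this
end Cent
theorem stmt_15 {p : ℕ} [Fact p.Prime] (hodd : Odd p) {P : Type} [Group P] [Fintype P]
    -- `P` is extraspecial of order `p³` and exponent `p`
    (hcard : Nat.card P = p ^ 3) (hnab : ∃ a b : P, a * b ≠ b * a)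
    (hZ : Nat.card (Subgroup.center P) = p) (hexp : ∀ g : P, g ^ p = 1)
    -- `χ` is a complex character of `P`
    (χ : P → ℂ) (hχ : ∃ V : FDRep ℂ P, χ = V.character)
    -- (a) `[χ|_E, 1_E] = 0` for every rank-2 elementary abelian `E ⊆ P`
    (hE : ∀ E : Subgroup P, IsElementaryAbelian p E → Nat.card E = p ^ 2 →
      (Nat.card E : ℂ)⁻¹ * ∑ e : E, χ ↑e = 0)
    -- (b) `χ(x) = χ(y)` for some nontrivial central `x` and noncentral `y`
    (hfus : ∃ x ∈ Subgroup.center P, x ≠ 1 ∧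
      ∃ y : P, y ∉ Subgroup.center P ∧ χ x = χ y) :
    ∀ g : P, χ g = 0 := by
  classical
  obtain ⟨V, rfl⟩ := hχ
  have hp : p.Prime := Fact.out
  haveI : NeZero p := ⟨hp.ne_zero⟩
  have hpC : (p : ℂ) ≠ 0 := Nat.cast_ne_zero.mpr hp.ne_zero
  have hζ : IsPrimitiveRoot (Complex.exp (2 * Real.pi * Complex.I / p)) p :=
    Complex.isPrimitiveRoot_exp p hp.ne_zero
  obtain ⟨d, hd1, hdm, hdinj⟩ := exists_dlog (Z := ↥(Subgroup.center P)) hZ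
  choose ω hω using fun m : ZMod p => exists_omega hζ d hd1 hdm m
  -- (a) gives vanishing centralizer sums
  have hEC : ∀ y, y ∉ Subgroup.center P →
      ∑ e : ↥(Subgroup.centralizer ({y} : Set P)), V.character ↑e = 0 := by
    intro y hy
    have hcentcard := aux_cent_card hcard hZ hy
    have hel : IsElementaryAbelian p (Subgroup.centralizer ({y} : Set P)) := by
      constructor
      · intro a ha b hb
        have hcomm := IsPGroup.commutative_of_card_eq_prime_sq hcentcard
          (⟨a, ha⟩ : ↥(Subgroup.centralizer ({y} : Set P))) ⟨b, hb⟩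
        exact Subtype.ext_iff.mp hcomm
      · intro a _
        exact hexp a
    have h0 := hE _ hel hcentcard
    rcases mul_eq_zero.mp h0 with h | h
    · exfalso
      rw [hcentcard] at h
      have : ((p : ℂ) ^ 2)⁻¹ = 0 := by
        rw [← h]; push_cast; ring
      exact (inv_ne_zero (pow_ne_zero _ hpC)) this
    · exact (sum_univ_fintype_congr _).trans h
  have hS0 : ∑ z : ↥(Subgroup.center P), V.character ↑z = 0 := by
    refine S_eq_zero hcard hZ V ?_
    intro y hy
    exact (sum_univ_fintype_congr _).trans (hEC y hy)
  have hcj : ∀ y : P, y ∉ Subgroup.center P →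
      ∀ z : P, z ∈ Subgroup.center P → V.character (y * z) = V.character y :=
    fun y hy z hz => char_mul_central hcard hZ V hy hz
  have hvan : ∀ y : P, y ∉ Subgroup.center P → V.character y = 0 := by
    intro y hy
    exact noncentral_vanish hcard hZ V hζ d hd1 hdinj ω hω hS0 hy (hcj y hy)
  obtain ⟨x, hxZ, hx1, y0, hy0, hxy⟩ := hfus
  have hχx : V.character x = 0 := by rw [hxy]; exact hvan y0 hy0
  have hcent := central_vanish hZ V hζ d hd1 hdinj ω hω hS0 hxZ hx1 hχx
  intro g
  by_cases hg : g ∈ Subgroup.center P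
  · exact hcent g hg
  · exact hvan g hg
end

section
/- Let G be a finite group, p a prime dividing |G|, and H ⊆ G a subgroup with p dividing |H| and rk_p(H) = rk_p(G) = rk(G). If G has a p-effective character, then H has a p-effective character. -/
open scoped Classical

/-- The rank of a group: the maximum of the `p`-ranks over all primes `p`. -/
noncomputable def groupRank (G : Type*) [Group G] : ℕ :=
  sSup {n | ∃ p : ℕ, p.Prime ∧ n = pRank p G}

/-- `G` has a `p`-effective character (relative to the rank `r`): a nonzero complex
character `χ` of a Sylow `p`-subgroup `G_p` that respects fusion in `G` and satisfies
`[χ|_E, 1_E] = 0` for every elementary abelian subgroup `E ⊆ G_p` of rank `r`. -/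
def HasPEffectiveChar (p : ℕ) (G : Type) [Group G] [Fintype G] (r : ℕ) : Prop :=
  ∃ (Gp : Sylow p G) (V : FDRep ℂ Gp) (χ : Gp → ℂ), χ = V.character ∧ χ ≠ 0 ∧
    (∀ h k : Gp, (∃ g : G, g * ↑h * g⁻¹ = ↑k) → χ h = χ k) ∧
    ∀ E : Subgroup Gp, IsElementaryAbelian p E → Nat.card E = p ^ r →
      (Nat.card E : ℂ)⁻¹ * ∑ e : E, χ ↑e = 0

/-! Conjugate a Sylow `p`-subgroup `H_p` of `H` into `G_p` by some `g ∈ G` and pull `χ` back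
along this injective conjugation map. Fusion in `H` is in particular fusion in `G`, and the
conjugation map sends elementary abelian subgroups of `H_p` of rank `r` to such subgroups of
`G_p`, over which `χ` has mean zero. -/

theorem IsElementaryAbelian.map {p : ℕ} {G K : Type*} [Group G] [Group K] {E : Subgroup G}
    (hE : IsElementaryAbelian p E) (f : G →* K) : IsElementaryAbelian p (E.map f) := by
  constructor
  · rintro _ ⟨a, ha, rfl⟩ _ ⟨b, hb, rfl⟩
    rw [← map_mul, ← map_mul, hE.1 a ha b hb]
  · rintro _ ⟨a, ha, rfl⟩
    rw [← map_pow, hE.2 a ha, map_one]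

theorem Sylow.exists_conj_mem_of_isPGroup {p : ℕ} [Fact p.Prime] {G : Type*} [Group G]
    [Finite (Sylow p G)] {P : Subgroup G} (hP : IsPGroup p P) (Q : Sylow p G) :
    ∃ g : G, ∀ x ∈ P, g * x * g⁻¹ ∈ Q := by
  obtain ⟨R, hPR⟩ := hP.exists_le_sylow
  obtain ⟨g, rfl⟩ := MulAction.exists_smul_eq G R Q
  refine ⟨g, fun x hx => ?_⟩
  rw [← SetLike.mem_coe, Sylow.coe_smul]
  exact ⟨x, hPR hx, rfl⟩

section ConjHom

variable {K G : Type*} [Group K] [Group G]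

def MonoidHom.conjCodRestrict (f : K →* G) (g : G) (Q : Subgroup G)
    (h : ∀ x, g * f x * g⁻¹ ∈ Q) : K →* Q :=
  ((MulAut.conj g).toMonoidHom.comp f).codRestrict Q h

theorem MonoidHom.coe_conjCodRestrict (f : K →* G) (g : G) (Q : Subgroup G)
    (h : ∀ x, g * f x * g⁻¹ ∈ Q) (x : K) : (f.conjCodRestrict g Q h x : G) = g * f x * g⁻¹ :=
  rfl

theorem MonoidHom.conjCodRestrict_injective {f : K →* G} (hf : Function.Injective f) (g : G)
    (Q : Subgroup G) (h : ∀ x, g * f x * g⁻¹ ∈ Q) :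
    Function.Injective (f.conjCodRestrict g Q h) :=
  (MonoidHom.injective_codRestrict _ _ _).2 <| (MulAut.conj g).injective.comp hf

end ConjHom

theorem FDRep.character_ne_zero_iff {k G : Type*} [Field k] [CharZero k] [Monoid G]
    {V : FDRep k G} : V.character ≠ 0 ↔ V.character 1 ≠ 0 := by
  refine ⟨fun hV => ?_, fun h1 h0 => h1 (congrFun h0 1)⟩
  contrapose! hV
  rw [FDRep.char_one, Nat.cast_eq_zero, Module.finrank_zero_iff] at hV
  funext g
  show LinearMap.trace k V (V.ρ g) = 0
  rw [Subsingleton.elim (V.ρ g) 0, map_zero]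

theorem FDRep.character_res {k G K : Type*} [Field k] [Monoid G] [Monoid K] (φ : K →* G)
    (V : FDRep k G) (x : K) :
    FDRep.character (G := K) ((Action.res _ φ).obj V) x = V.character (φ x) :=
  rfl

theorem Subgroup.sum_map_of_injective {A B M : Type*} [Group A] [Group B] [AddCommMonoid M]
    {φ : A →* B} (hφ : Function.Injective φ) (E : Subgroup A) [Fintype E] [Fintype (E.map φ)]
    (f : B → M) : ∑ e : E.map φ, f e = ∑ e : E, f (φ e) :=
  (Fintype.sum_equiv (E.equivMapOfInjective φ hφ).toEquiv _ _ fun _ => rfl).symm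

theorem stmt_16_general {p : ℕ} [Fact p.Prime] {G : Type} [Group G] [Fintype G]
    (H : Subgroup G)
    (hGeff : HasPEffectiveChar p G (groupRank G)) :
    HasPEffectiveChar p H (groupRank G) := by
  obtain ⟨Gp, V, _, rfl, hχ0, hfus, hEA⟩ := hGeff
  obtain ⟨Hp⟩ : Nonempty (Sylow p H) := inferInstance
  let ι : Hp →* G := H.subtype.comp (Hp : Subgroup H).subtype
  have hι : Function.Injective ι := H.subtype_injective.comp Subtype.val_injective
  obtain ⟨g, hg⟩ := Gp.exists_conj_mem_of_isPGroup (Hp.2.map H.subtype)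
  let φ := ι.conjCodRestrict g Gp fun x => hg _ ⟨x, x.2, rfl⟩
  have hφ : Function.Injective φ := ι.conjCodRestrict_injective hι g Gp _
  refine ⟨Hp, (Action.res _ φ).obj V, _, rfl, ?_, ?_, ?_⟩
  · rwa [FDRep.character_ne_zero_iff, FDRep.character_res φ, map_one, ← FDRep.character_ne_zero_iff]
  · rintro x y ⟨b, hb⟩
    refine hfus _ _ ⟨g * b * g⁻¹, ?_⟩
    have hbG : (b : G) * ι x * (b : G)⁻¹ = ι y := by simp [ι, ← hb]
    simp only [φ, MonoidHom.coe_conjCodRestrict, ← hbG]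
    group
  · intro E hE hcard
    have hmap := hEA (E.map φ) (hE.map φ) (by rw [Subgroup.card_map_of_injective hφ, hcard])
    rwa [Subgroup.card_map_of_injective hφ, Subgroup.sum_map_of_injective hφ] at hmap

theorem stmt_16 {p : ℕ} [Fact p.Prime] {G : Type} [Group G] [Fintype G]
    (H : Subgroup G) (hdvdG : p ∣ Nat.card G) (hdvdH : p ∣ Nat.card H)
    (hrk : pRank p H = pRank p G) (hrkG : pRank p G = groupRank G)
    (hGeff : HasPEffectiveChar p G (groupRank G)) :
    HasPEffectiveChar p H (groupRank G) :=
  stmt_16_general H hGeff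
end
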